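/- arXiv:1808.06175 — 9 statements merged into one kernel-verified Lean document; each statement's English description precedes it below -/
import Mathlib

section
/- The Erlang-B blocking probability E(N,a) = (a^N/N!) / (∑_{j=0}^{N} a^j/j!) is strictly decreasing in N for fixed offered load a > 0; that is, for all natural numbers N, E(N+1, a) < E(N, a). -/
noncomputable def ErlangB (N : ℕ) (a : ℝ) : ℝ :=
  (a ^ N / (Nat.factorial N : ℝ)) / (∑ j ∈ Finset.range (N + 1), a ^ j / (Nat.factorial j : ℝ))

theorem erlangB_strict_anti (a : ℝ) (ha : 0 < a) (N : ℕ) :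
    ErlangB (N + 1) a < ErlangB N a := by
  set t : ℕ → ℝ := fun j => a ^ j / (Nat.factorial j : ℝ) with ht
  have htpos : ∀ j, 0 < t j := fun j =>
    div_pos (pow_pos ha j) (by exact_mod_cast Nat.factorial_pos j)
  have hSpos : ∀ M : ℕ, 0 < ∑ j ∈ Finset.range (M + 1), t j := fun M =>
    Finset.sum_pos (fun j _ => htpos j) ⟨0, Finset.mem_range.2 (Nat.succ_pos M)⟩
  have key : t (N + 1) * ∑ j ∈ Finset.range (N + 1), t j <
      t N * ∑ j ∈ Finset.range (N + 2), t j := by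
    have hshift : ∑ j ∈ Finset.range (N + 2), t j
        = (∑ j ∈ Finset.range (N + 1), t (j + 1)) + t 0 :=
      Finset.sum_range_succ' t (N + 1)
    rw [hshift, mul_add, Finset.mul_sum, Finset.mul_sum]
    have hle : ∑ j ∈ Finset.range (N + 1), t (N + 1) * t j
        ≤ ∑ j ∈ Finset.range (N + 1), t N * t (j + 1) := by
      apply Finset.sum_le_sum
      intro j hj
      have hj' : j + 1 ≤ N + 1 := Finset.mem_range.1 hj
      simp only [ht]
      rw [div_mul_div_comm, div_mul_div_comm, pow_succ, pow_succ]
      have hnum : a ^ N * a * a ^ j = a ^ N * (a ^ j * a) := by ring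
      rw [hnum]
      apply div_le_div_of_nonneg_left
      · positivity
      · positivity
      · have hnat : Nat.factorial N * Nat.factorial (j + 1)
            ≤ Nat.factorial (N + 1) * Nat.factorial j := by
          rw [Nat.factorial_succ j, Nat.factorial_succ N]
          calc Nat.factorial N * ((j + 1) * Nat.factorial j)
              = (j + 1) * (Nat.factorial N * Nat.factorial j) := by ring
            _ ≤ (N + 1) * (Nat.factorial N * Nat.factorial j) :=
                Nat.mul_le_mul_right _ hj'
            _ = (N + 1) * Nat.factorial N * Nat.factorial j := by ring
        exact_mod_cast hnat
    have hpos : 0 < t N * t 0 := mul_pos (htpos N) (htpos 0)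
    linarith
  have h1 : 0 < ∑ j ∈ Finset.range (N + 1), t j := hSpos N
  have h2 : 0 < ∑ j ∈ Finset.range (N + 1 + 1), t j := hSpos (N + 1)
  unfold ErlangB
  rw [div_lt_div_iff₀ h2 h1]
  simpa [ht, mul_comm] using key
end

section
/- For natural numbers N1, N2 and positive reals a1, a2 with N1+N2 ≥ 1, the pooled Erlang-B blocking probability is strictly smaller than the traffic-weighted average of the standalone blocking probabilities: E(N1+N2, a1+a2) < (a1/(a1+a2))·E(N1,a1) + (a2/(a1+a2))·E(N2,a2). -/
open Finset

namespace ErlangAux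

noncomputable def rho (a : ℝ) (i : ℕ) : ℝ := a ^ i / (Nat.factorial i : ℝ)

lemma rho_pos {a : ℝ} (ha : 0 < a) (i : ℕ) : 0 < rho a i := by
  unfold rho
  have : (0:ℝ) < (Nat.factorial i : ℝ) := by
    exact_mod_cast Nat.factorial_pos i
  positivity

lemma rho_succ (a : ℝ) (k : ℕ) : ((k : ℝ) + 1) * rho a (k + 1) = a * rho a k := by
  unfold rho
  rw [Nat.factorial_succ]
  have h1 : ((Nat.factorial k : ℝ)) ≠ 0 := Nat.cast_ne_zero.2 (Nat.factorial_ne_zero k)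
  have h2 : ((k : ℝ) + 1) ≠ 0 := by positivity
  push_cast
  field_simp
  ring

lemma shift (a : ℝ) (n : ℕ) :
    a * ∑ j ∈ range (n + 1), rho a j
      = (∑ j ∈ range (n + 1), (j : ℝ) * rho a j) + a * rho a n := by
  induction n with
  | zero => simp
  | succ n ih =>
      rw [sum_range_succ (f := fun j => rho a j), sum_range_succ (f := fun j => (j : ℝ) * rho a j),
        mul_add, ih]
      have h := (rho_succ a n).symm
      push_cast
      linarith [h]

lemma cheb_le (w b : ℕ → ℝ) (hr : ∀ k m : ℕ, k ≤ m → b m * w k ≤ b k * w m) :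
    ∀ n : ℕ,
      (∑ m ∈ range (n + 1), (m : ℝ) * b m) * (∑ m ∈ range (n + 1), w m)
        ≤ (∑ m ∈ range (n + 1), (m : ℝ) * w m) * (∑ m ∈ range (n + 1), b m) := by
  intro n
  induction n with
  | zero => simp
  | succ n ih =>
      rw [sum_range_succ (f := fun m => (m : ℝ) * b m), sum_range_succ (f := fun m => w m),
        sum_range_succ (f := fun m => (m : ℝ) * w m), sum_range_succ (f := fun m => b m)]
      set Sb := ∑ m ∈ range (n + 1), b m with hSbdef
      set Sw := ∑ m ∈ range (n + 1), w m with hSwdef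
      set Mb := ∑ m ∈ range (n + 1), (m : ℝ) * b m with hMbdef
      set Mw := ∑ m ∈ range (n + 1), (m : ℝ) * w m with hMwdef
      have H : ((n : ℝ) + 1) * b (n + 1) * Sw + Mb * w (n + 1)
          ≤ ((n : ℝ) + 1) * w (n + 1) * Sb + Mw * b (n + 1) := by
        have hterm : ∀ m ∈ range (n + 1),
            ((n : ℝ) + 1) * b (n + 1) * w m + ((m : ℝ) * b m) * w (n + 1)
              ≤ ((n : ℝ) + 1) * w (n + 1) * b m + ((m : ℝ) * w m) * b (n + 1) := by
          intro m hm
          have hmn : m ≤ n + 1 := le_of_lt (mem_range.1 hm)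
          have hm' : (m : ℝ) ≤ (n : ℝ) + 1 := by exact_mod_cast hmn
          have h := hr m (n + 1) hmn
          nlinarith [mul_nonneg (sub_nonneg.2 hm') (sub_nonneg.2 h)]
        have hsum := Finset.sum_le_sum hterm
        have e1 : ∑ m ∈ range (n + 1),
            (((n : ℝ) + 1) * b (n + 1) * w m + ((m : ℝ) * b m) * w (n + 1))
            = ((n : ℝ) + 1) * b (n + 1) * Sw + Mb * w (n + 1) := by
          rw [sum_add_distrib, ← mul_sum, ← sum_mul]
        have e2 : ∑ m ∈ range (n + 1),
            (((n : ℝ) + 1) * w (n + 1) * b m + ((m : ℝ) * w m) * b (n + 1))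
            = ((n : ℝ) + 1) * w (n + 1) * Sb + Mw * b (n + 1) := by
          rw [sum_add_distrib, ← mul_sum, ← sum_mul]
        rw [e1, e2] at hsum
        exact hsum
      push_cast
      nlinarith [ih, H]

lemma cheb_lt (w b : ℕ → ℝ) (hr : ∀ k m : ℕ, k ≤ m → b m * w k ≤ b k * w m) (n : ℕ)
    (hs : b (n + 1) * w n < b n * w (n + 1)) :
    (∑ m ∈ range (n + 2), (m : ℝ) * b m) * (∑ m ∈ range (n + 2), w m)
      < (∑ m ∈ range (n + 2), (m : ℝ) * w m) * (∑ m ∈ range (n + 2), b m) := by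
  have ih := cheb_le w b hr n
  rw [show n + 2 = (n + 1) + 1 from rfl]
  rw [sum_range_succ (f := fun m => (m : ℝ) * b m), sum_range_succ (f := fun m => w m),
    sum_range_succ (f := fun m => (m : ℝ) * w m), sum_range_succ (f := fun m => b m)]
  set Sb := ∑ m ∈ range (n + 1), b m with hSbdef
  set Sw := ∑ m ∈ range (n + 1), w m with hSwdef
  set Mb := ∑ m ∈ range (n + 1), (m : ℝ) * b m with hMbdef
  set Mw := ∑ m ∈ range (n + 1), (m : ℝ) * w m with hMwdef
  have H : ((n : ℝ) + 1) * b (n + 1) * Sw + Mb * w (n + 1)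
      < ((n : ℝ) + 1) * w (n + 1) * Sb + Mw * b (n + 1) := by
    have hterm : ∀ m ∈ range (n + 1),
        ((n : ℝ) + 1) * b (n + 1) * w m + ((m : ℝ) * b m) * w (n + 1)
          ≤ ((n : ℝ) + 1) * w (n + 1) * b m + ((m : ℝ) * w m) * b (n + 1) := by
      intro m hm
      have hmn : m ≤ n + 1 := le_of_lt (mem_range.1 hm)
      have hm' : (m : ℝ) ≤ (n : ℝ) + 1 := by exact_mod_cast hmn
      have h := hr m (n + 1) hmn
      nlinarith [mul_nonneg (sub_nonneg.2 hm') (sub_nonneg.2 h)]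
    have hstrict : ∃ i ∈ range (n + 1),
        ((n : ℝ) + 1) * b (n + 1) * w i + ((i : ℝ) * b i) * w (n + 1)
          < ((n : ℝ) + 1) * w (n + 1) * b i + ((i : ℝ) * w i) * b (n + 1) := by
      refine ⟨n, mem_range.2 (Nat.lt_succ_self n), ?_⟩
      nlinarith [hs]
    have hsum := Finset.sum_lt_sum hterm hstrict
    have e1 : ∑ m ∈ range (n + 1),
        (((n : ℝ) + 1) * b (n + 1) * w m + ((m : ℝ) * b m) * w (n + 1))
        = ((n : ℝ) + 1) * b (n + 1) * Sw + Mb * w (n + 1) := by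
      rw [sum_add_distrib, ← mul_sum, ← sum_mul]
    have e2 : ∑ m ∈ range (n + 1),
        (((n : ℝ) + 1) * w (n + 1) * b m + ((m : ℝ) * w m) * b (n + 1))
        = ((n : ℝ) + 1) * w (n + 1) * Sb + Mw * b (n + 1) := by
      rw [sum_add_distrib, ← mul_sum, ← sum_mul]
    rw [e1, e2] at hsum
    exact hsum
  push_cast
  nlinarith [ih, H]

noncomputable def bfun (N1 N2 : ℕ) (a1 a2 : ℝ) (m : ℕ) : ℝ :=
  ∑ p ∈ (range (N1 + 1) ×ˢ range (N2 + 1)).filter (fun p => p.1 + p.2 = m),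
    rho a1 p.1 * rho a2 p.2

lemma bfun_nonneg {a1 a2 : ℝ} (ha1 : 0 < a1) (ha2 : 0 < a2) (N1 N2 m : ℕ) :
    0 ≤ bfun N1 N2 a1 a2 m :=
  Finset.sum_nonneg fun p _ => le_of_lt (mul_pos (rho_pos ha1 _) (rho_pos ha2 _))

lemma bfun_rec {a1 a2 : ℝ} (ha1 : 0 < a1) (ha2 : 0 < a2) (N1 N2 m : ℕ) :
    ((m : ℝ) + 1) * bfun N1 N2 a1 a2 (m + 1) ≤ (a1 + a2) * bfun N1 N2 a1 a2 m := by
  classical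
  set box := (range (N1 + 1) ×ˢ range (N2 + 1)) with hbox
  have h1 : ((m : ℝ) + 1) * bfun N1 N2 a1 a2 (m + 1)
      = ∑ p ∈ box.filter (fun p => p.1 + p.2 = m + 1),
          ((p.1 : ℝ) * (rho a1 p.1 * rho a2 p.2) + (p.2 : ℝ) * (rho a1 p.1 * rho a2 p.2)) := by
    unfold bfun
    rw [mul_sum]
    refine sum_congr rfl fun p hp => ?_
    have hp' : p.1 + p.2 = m + 1 := (mem_filter.1 hp).2
    have hcast : ((m : ℝ) + 1) = (p.1 : ℝ) + (p.2 : ℝ) := by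
      have := congrArg (fun k : ℕ => (k : ℝ)) hp'
      push_cast at this
      linarith
    rw [hcast]; ring
  have hA1 : ∑ p ∈ box.filter (fun p => p.1 + p.2 = m + 1),
      (p.1 : ℝ) * (rho a1 p.1 * rho a2 p.2) ≤ a1 * bfun N1 N2 a1 a2 m := by
    have hz : ∑ p ∈ (box.filter (fun p => p.1 + p.2 = m + 1)).filter (fun p => p.1 ≠ 0),
        (p.1 : ℝ) * (rho a1 p.1 * rho a2 p.2)
        = ∑ p ∈ box.filter (fun p => p.1 + p.2 = m + 1),
            (p.1 : ℝ) * (rho a1 p.1 * rho a2 p.2) := by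
      apply Finset.sum_filter_of_ne
      intro p _ hne h0
      apply hne
      simp [h0]
    rw [← hz]
    have hcongr : ∑ p ∈ (box.filter (fun p => p.1 + p.2 = m + 1)).filter (fun p => p.1 ≠ 0),
        (p.1 : ℝ) * (rho a1 p.1 * rho a2 p.2)
        = ∑ p ∈ (box.filter (fun p => p.1 + p.2 = m + 1)).filter (fun p => p.1 ≠ 0),
            a1 * (rho a1 (p.1 - 1) * rho a2 p.2) := by
      refine sum_congr rfl fun p hp => ?_
      have h0 : p.1 ≠ 0 := (mem_filter.1 hp).2
      obtain ⟨k, hk⟩ := Nat.exists_eq_succ_of_ne_zero h0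
      rw [hk]
      simp only [Nat.succ_sub_one]
      have h := rho_succ a1 k
      push_cast
      linear_combination (rho a2 p.2) * h
    rw [hcongr]
    set s := (box.filter (fun p => p.1 + p.2 = m + 1)).filter (fun p => p.1 ≠ 0) with hs
    have hinj : ∀ p ∈ s, ∀ q ∈ s, (fun p : ℕ × ℕ => (p.1 - 1, p.2)) p
        = (fun p : ℕ × ℕ => (p.1 - 1, p.2)) q → p = q := by
      intro p hp q hq h
      have hp0 : p.1 ≠ 0 := (mem_filter.1 hp).2
      have hq0 : q.1 ≠ 0 := (mem_filter.1 hq).2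
      have h1 := congrArg Prod.fst h
      have h2 := congrArg Prod.snd h
      simp only at h1 h2
      have : p.1 = q.1 := by omega
      exact Prod.ext this h2
    have himg : ∑ p ∈ s, a1 * (rho a1 (p.1 - 1) * rho a2 p.2)
        = ∑ q ∈ s.image (fun p : ℕ × ℕ => (p.1 - 1, p.2)),
            a1 * (rho a1 q.1 * rho a2 q.2) := by
      rw [Finset.sum_image hinj]
    rw [himg]
    have hsub : s.image (fun p : ℕ × ℕ => (p.1 - 1, p.2))
        ⊆ box.filter (fun p => p.1 + p.2 = m) := by
      intro q hq
      obtain ⟨p, hp, hpq⟩ := Finset.mem_image.1 hq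
      have hp1 := mem_filter.1 hp
      have hp2 := mem_filter.1 hp1.1
      have hpbox := Finset.mem_product.1 hp2.1
      have hr1 := mem_range.1 hpbox.1
      have hr2 := mem_range.1 hpbox.2
      have hsum := hp2.2
      have h0 := hp1.2
      subst hpq
      simp only [mem_filter, hbox, Finset.mem_product, mem_range]
      constructor
      · constructor <;> omega
      · omega
    have := Finset.sum_le_sum_of_subset_of_nonneg
      (f := fun q : ℕ × ℕ => a1 * (rho a1 q.1 * rho a2 q.2)) hsub
      (fun q _ _ => le_of_lt (mul_pos ha1 (mul_pos (rho_pos ha1 _) (rho_pos ha2 _))))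
    refine this.trans (le_of_eq ?_)
    unfold bfun
    rw [← mul_sum]
  have hA2 : ∑ p ∈ box.filter (fun p => p.1 + p.2 = m + 1),
      (p.2 : ℝ) * (rho a1 p.1 * rho a2 p.2) ≤ a2 * bfun N1 N2 a1 a2 m := by
    have hz : ∑ p ∈ (box.filter (fun p => p.1 + p.2 = m + 1)).filter (fun p => p.2 ≠ 0),
        (p.2 : ℝ) * (rho a1 p.1 * rho a2 p.2)
        = ∑ p ∈ box.filter (fun p => p.1 + p.2 = m + 1),
            (p.2 : ℝ) * (rho a1 p.1 * rho a2 p.2) := by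
      apply Finset.sum_filter_of_ne
      intro p _ hne h0
      apply hne
      simp [h0]
    rw [← hz]
    have hcongr : ∑ p ∈ (box.filter (fun p => p.1 + p.2 = m + 1)).filter (fun p => p.2 ≠ 0),
        (p.2 : ℝ) * (rho a1 p.1 * rho a2 p.2)
        = ∑ p ∈ (box.filter (fun p => p.1 + p.2 = m + 1)).filter (fun p => p.2 ≠ 0),
            a2 * (rho a1 p.1 * rho a2 (p.2 - 1)) := by
      refine sum_congr rfl fun p hp => ?_
      have h0 : p.2 ≠ 0 := (mem_filter.1 hp).2
      obtain ⟨k, hk⟩ := Nat.exists_eq_succ_of_ne_zero h0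
      rw [hk]
      simp only [Nat.succ_sub_one]
      have h := rho_succ a2 k
      push_cast
      linear_combination (rho a1 p.1) * h
    rw [hcongr]
    set s := (box.filter (fun p => p.1 + p.2 = m + 1)).filter (fun p => p.2 ≠ 0) with hs
    have hinj : ∀ p ∈ s, ∀ q ∈ s, (fun p : ℕ × ℕ => (p.1, p.2 - 1)) p
        = (fun p : ℕ × ℕ => (p.1, p.2 - 1)) q → p = q := by
      intro p hp q hq h
      have hp0 : p.2 ≠ 0 := (mem_filter.1 hp).2
      have hq0 : q.2 ≠ 0 := (mem_filter.1 hq).2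
      have h1 := congrArg Prod.fst h
      have h2 := congrArg Prod.snd h
      simp only at h1 h2
      have : p.2 = q.2 := by omega
      exact Prod.ext h1 this
    have himg : ∑ p ∈ s, a2 * (rho a1 p.1 * rho a2 (p.2 - 1))
        = ∑ q ∈ s.image (fun p : ℕ × ℕ => (p.1, p.2 - 1)),
            a2 * (rho a1 q.1 * rho a2 q.2) := by
      rw [Finset.sum_image hinj]
    rw [himg]
    have hsub : s.image (fun p : ℕ × ℕ => (p.1, p.2 - 1))
        ⊆ box.filter (fun p => p.1 + p.2 = m) := by
      intro q hq
      obtain ⟨p, hp, hpq⟩ := Finset.mem_image.1 hq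
      have hp1 := mem_filter.1 hp
      have hp2 := mem_filter.1 hp1.1
      have hpbox := Finset.mem_product.1 hp2.1
      have hr1 := mem_range.1 hpbox.1
      have hr2 := mem_range.1 hpbox.2
      have hsum := hp2.2
      have h0 := hp1.2
      subst hpq
      simp only [mem_filter, hbox, Finset.mem_product, mem_range]
      constructor
      · constructor <;> omega
      · omega
    have := Finset.sum_le_sum_of_subset_of_nonneg
      (f := fun q : ℕ × ℕ => a2 * (rho a1 q.1 * rho a2 q.2)) hsub
      (fun q _ _ => le_of_lt (mul_pos ha2 (mul_pos (rho_pos ha1 _) (rho_pos ha2 _))))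
    refine this.trans (le_of_eq ?_)
    unfold bfun
    rw [← mul_sum]
  rw [h1, sum_add_distrib, add_mul]
  exact add_le_add hA1 hA2

lemma bfun_strict {a1 a2 : ℝ} (ha1 : 0 < a1) (ha2 : 0 < a2) (N1 N2 M : ℕ)
    (hM : N1 + N2 = M + 1) :
    ((M : ℝ) + 1) * bfun N1 N2 a1 a2 (M + 1) < (a1 + a2) * bfun N1 N2 a1 a2 M := by
  classical
  have hf1 : (range (N1 + 1) ×ˢ range (N2 + 1)).filter (fun p => p.1 + p.2 = M + 1)
      = {(N1, N2)} := by
    ext p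
    simp only [mem_filter, Finset.mem_product, mem_range, Finset.mem_singleton, Prod.ext_iff]
    omega
  have hbtop : bfun N1 N2 a1 a2 (M + 1) = rho a1 N1 * rho a2 N2 := by
    unfold bfun
    rw [hf1, Finset.sum_singleton]
  rcases Nat.eq_zero_or_pos N1 with h1 | h1
  · -- N1 = 0, N2 = M + 1
    subst h1
    have hN2 : N2 = M + 1 := by omega
    subst hN2
    have hf2 : (range (0 + 1) ×ˢ range (M + 1 + 1)).filter (fun p => p.1 + p.2 = M)
        = {((0 : ℕ), M)} := by
      ext p
      simp only [mem_filter, Finset.mem_product, mem_range, Finset.mem_singleton, Prod.ext_iff]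
      omega
    have hbM : bfun 0 (M + 1) a1 a2 M = rho a1 0 * rho a2 M := by
      unfold bfun
      rw [hf2, Finset.sum_singleton]
    rw [hbtop, hbM]
    have e : ((M : ℝ) + 1) * (rho a1 0 * rho a2 (M + 1)) = a2 * (rho a1 0 * rho a2 M) := by
      linear_combination (rho a1 0) * rho_succ a2 M
    rw [e]
    nlinarith [mul_pos (rho_pos ha1 0) (rho_pos ha2 M), ha1]
  rcases Nat.eq_zero_or_pos N2 with h2 | h2
  · -- N2 = 0, N1 = M + 1
    subst h2
    have hN1 : N1 = M + 1 := by omega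
    subst hN1
    have hf2 : (range (M + 1 + 1) ×ˢ range (0 + 1)).filter (fun p => p.1 + p.2 = M)
        = {(M, (0 : ℕ))} := by
      ext p
      simp only [mem_filter, Finset.mem_product, mem_range, Finset.mem_singleton, Prod.ext_iff]
      omega
    have hbM : bfun (M + 1) 0 a1 a2 M = rho a1 M * rho a2 0 := by
      unfold bfun
      rw [hf2, Finset.sum_singleton]
    rw [hbtop, hbM]
    have e : ((M : ℝ) + 1) * (rho a1 (M + 1) * rho a2 0) = a1 * (rho a1 M * rho a2 0) := by
      linear_combination (rho a2 0) * rho_succ a1 M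
    rw [e]
    nlinarith [mul_pos (rho_pos ha1 M) (rho_pos ha2 0), ha2]
  · -- both positive
    obtain ⟨k1, hk1⟩ := Nat.exists_eq_succ_of_ne_zero (Nat.pos_iff_ne_zero.1 h1)
    obtain ⟨k2, hk2⟩ := Nat.exists_eq_succ_of_ne_zero (Nat.pos_iff_ne_zero.1 h2)
    subst hk1; subst hk2
    have hf2 : (range (k1 + 1 + 1) ×ˢ range (k2 + 1 + 1)).filter (fun p => p.1 + p.2 = M)
        = {(k1, k2 + 1), (k1 + 1, k2)} := by
      ext p
      simp only [mem_filter, Finset.mem_product, mem_range, Finset.mem_insert,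
        Finset.mem_singleton, Prod.ext_iff]
      omega
    have hbM : bfun (k1 + 1) (k2 + 1) a1 a2 M
        = rho a1 k1 * rho a2 (k2 + 1) + rho a1 (k1 + 1) * rho a2 k2 := by
      unfold bfun
      rw [hf2]
      rw [Finset.sum_insert (by simp), Finset.sum_singleton]
    have hMr : (M : ℝ) = (k1 : ℝ) + (k2 : ℝ) + 1 := by
      have : M = k1 + k2 + 1 := by omega
      rw [this]; push_cast; ring
    rw [hbtop, hbM, hMr]
    have e : ((k1 : ℝ) + (k2 : ℝ) + 1 + 1) * (rho a1 (k1 + 1) * rho a2 (k2 + 1))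
        = a1 * (rho a1 k1 * rho a2 (k2 + 1)) + a2 * (rho a1 (k1 + 1) * rho a2 k2) := by
      linear_combination (rho a2 (k2 + 1)) * rho_succ a1 k1 + (rho a1 (k1 + 1)) * rho_succ a2 k2
    rw [e]
    nlinarith [mul_pos (rho_pos ha1 k1) (rho_pos ha2 (k2 + 1)),
      mul_pos (rho_pos ha1 (k1 + 1)) (rho_pos ha2 k2), ha1, ha2]

lemma bfun_maps_to (N1 N2 : ℕ) :
    ∀ p ∈ (range (N1 + 1) ×ˢ range (N2 + 1)), p.1 + p.2 ∈ range (N1 + N2 + 1) := by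
  intro p hp
  have h := Finset.mem_product.1 hp
  have h1 := mem_range.1 h.1
  have h2 := mem_range.1 h.2
  exact mem_range.2 (by omega)

lemma bfun_sum (N1 N2 : ℕ) (a1 a2 : ℝ) :
    ∑ m ∈ range (N1 + N2 + 1), bfun N1 N2 a1 a2 m
      = (∑ i ∈ range (N1 + 1), rho a1 i) * (∑ j ∈ range (N2 + 1), rho a2 j) := by
  unfold bfun
  rw [Finset.sum_fiberwise_of_maps_to (bfun_maps_to N1 N2)]
  rw [Finset.sum_mul_sum]
  rw [Finset.sum_product]

lemma bfun_msum (N1 N2 : ℕ) (a1 a2 : ℝ) :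
    ∑ m ∈ range (N1 + N2 + 1), (m : ℝ) * bfun N1 N2 a1 a2 m
      = (∑ i ∈ range (N1 + 1), (i : ℝ) * rho a1 i) * (∑ j ∈ range (N2 + 1), rho a2 j)
        + (∑ i ∈ range (N1 + 1), rho a1 i) * (∑ j ∈ range (N2 + 1), (j : ℝ) * rho a2 j) := by
  have h1 : ∀ m ∈ range (N1 + N2 + 1), (m : ℝ) * bfun N1 N2 a1 a2 m
      = ∑ p ∈ (range (N1 + 1) ×ˢ range (N2 + 1)).filter (fun p => p.1 + p.2 = m),
          ((p.1 : ℝ) + (p.2 : ℝ)) * (rho a1 p.1 * rho a2 p.2) := by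
    intro m _
    unfold bfun
    rw [mul_sum]
    refine sum_congr rfl fun p hp => ?_
    have hp' : p.1 + p.2 = m := (mem_filter.1 hp).2
    have hcast : (m : ℝ) = (p.1 : ℝ) + (p.2 : ℝ) := by
      rw [← hp']; push_cast; ring
    rw [hcast]
  rw [sum_congr rfl h1]
  rw [Finset.sum_fiberwise_of_maps_to (bfun_maps_to N1 N2)]
  rw [Finset.sum_mul_sum, Finset.sum_mul_sum, Finset.sum_product]
  rw [← sum_add_distrib]
  refine sum_congr rfl fun i _ => ?_
  rw [← sum_add_distrib]
  refine sum_congr rfl fun j _ => ?_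
  ring

lemma ratio_antitone {a1 a2 : ℝ} (ha1 : 0 < a1) (ha2 : 0 < a2) (N1 N2 : ℕ) :
    ∀ k m : ℕ, k ≤ m →
      bfun N1 N2 a1 a2 m * rho (a1 + a2) k ≤ bfun N1 N2 a1 a2 k * rho (a1 + a2) m := by
  have hA : 0 < a1 + a2 := by linarith
  have hstep : ∀ n : ℕ,
      bfun N1 N2 a1 a2 (n + 1) / rho (a1 + a2) (n + 1)
        ≤ bfun N1 N2 a1 a2 n / rho (a1 + a2) n := by
    intro n
    rw [div_le_div_iff₀ (rho_pos hA _) (rho_pos hA _)]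
    have hfac : ((Nat.factorial n : ℝ)) ≠ 0 := Nat.cast_ne_zero.2 (Nat.factorial_ne_zero n)
    have hfac1 : ((Nat.factorial (n + 1) : ℝ)) ≠ 0 :=
      Nat.cast_ne_zero.2 (Nat.factorial_ne_zero (n + 1))
    have key := mul_le_mul_of_nonneg_right (bfun_rec ha1 ha2 N1 N2 n)
      (show (0 : ℝ) ≤ (a1 + a2) ^ n / ((Nat.factorial (n + 1) : ℝ)) by positivity)
    calc bfun N1 N2 a1 a2 (n + 1) * rho (a1 + a2) n
        = ((n : ℝ) + 1) * bfun N1 N2 a1 a2 (n + 1)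
            * ((a1 + a2) ^ n / ((Nat.factorial (n + 1) : ℝ))) := by
          unfold rho
          rw [Nat.factorial_succ]
          push_cast
          have hn1 : ((n : ℝ) + 1) ≠ 0 := by positivity
          field_simp
      _ ≤ (a1 + a2) * bfun N1 N2 a1 a2 n
            * ((a1 + a2) ^ n / ((Nat.factorial (n + 1) : ℝ))) := key
      _ = bfun N1 N2 a1 a2 n * rho (a1 + a2) (n + 1) := by
          unfold rho
          rw [pow_succ]
          ring
  have hanti : Antitone (fun n => bfun N1 N2 a1 a2 n / rho (a1 + a2) n) :=
    antitone_nat_of_succ_le hstep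
  intro k m hkm
  have := hanti hkm
  rw [div_le_div_iff₀ (rho_pos hA _) (rho_pos hA _)] at this
  exact this

end ErlangAux

open ErlangAux in
theorem erlangB_pooling_gain (N1 N2 : ℕ) (a1 a2 : ℝ) (ha1 : 0 < a1) (ha2 : 0 < a2)
    (hN : 1 ≤ N1 + N2) :
    ErlangB (N1 + N2) (a1 + a2) <
      (a1 / (a1 + a2)) * ErlangB N1 a1 + (a2 / (a1 + a2)) * ErlangB N2 a2 := by
  classical
  have hA : 0 < a1 + a2 := by linarith
  obtain ⟨M, hM⟩ : ∃ M, N1 + N2 = M + 1 := ⟨N1 + N2 - 1, by omega⟩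
  -- strict ratio inequality at top
  have hstrict : bfun N1 N2 a1 a2 (M + 1) * rho (a1 + a2) M
      < bfun N1 N2 a1 a2 M * rho (a1 + a2) (M + 1) := by
    have hfac1 : ((Nat.factorial (M + 1) : ℝ)) ≠ 0 :=
      Nat.cast_ne_zero.2 (Nat.factorial_ne_zero (M + 1))
    have key := mul_lt_mul_of_pos_right (bfun_strict ha1 ha2 N1 N2 M hM)
      (show (0 : ℝ) < (a1 + a2) ^ M / ((Nat.factorial (M + 1) : ℝ)) by
        have : (0:ℝ) < (Nat.factorial (M+1) : ℝ) := by exact_mod_cast Nat.factorial_pos (M+1)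
        positivity)
    calc bfun N1 N2 a1 a2 (M + 1) * rho (a1 + a2) M
        = ((M : ℝ) + 1) * bfun N1 N2 a1 a2 (M + 1)
            * ((a1 + a2) ^ M / ((Nat.factorial (M + 1) : ℝ))) := by
          unfold rho
          rw [Nat.factorial_succ]
          have hfac : ((Nat.factorial M : ℝ)) ≠ 0 := Nat.cast_ne_zero.2 (Nat.factorial_ne_zero M)
          have hm1 : ((M : ℝ) + 1) ≠ 0 := by positivity
          push_cast
          field_simp
      _ < (a1 + a2) * bfun N1 N2 a1 a2 M
            * ((a1 + a2) ^ M / ((Nat.factorial (M + 1) : ℝ))) := key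
      _ = bfun N1 N2 a1 a2 M * rho (a1 + a2) (M + 1) := by
          unfold rho
          rw [pow_succ]
          ring
  have key := cheb_lt (rho (a1 + a2)) (bfun N1 N2 a1 a2)
    (ratio_antitone ha1 ha2 N1 N2) M hstrict
  rw [show M + 2 = (N1 + N2) + 1 by omega] at key
  rw [bfun_sum, bfun_msum] at key
  set S1 := ∑ i ∈ range (N1 + 1), rho a1 i with hS1def
  set S2 := ∑ j ∈ range (N2 + 1), rho a2 j with hS2def
  set Sw := ∑ m ∈ range (N1 + N2 + 1), rho (a1 + a2) m with hSwdef
  set M1 := ∑ i ∈ range (N1 + 1), (i : ℝ) * rho a1 i with hM1def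
  set M2 := ∑ j ∈ range (N2 + 1), (j : ℝ) * rho a2 j with hM2def
  set Mw := ∑ m ∈ range (N1 + N2 + 1), (m : ℝ) * rho (a1 + a2) m with hMwdef
  have hS1 : 0 < S1 := Finset.sum_pos (fun i _ => rho_pos ha1 i) (by simp)
  have hS2 : 0 < S2 := Finset.sum_pos (fun j _ => rho_pos ha2 j) (by simp)
  have hSw : 0 < Sw := Finset.sum_pos (fun m _ => rho_pos hA m) (by simp)
  have idA : (a1 + a2) * Sw = Mw + (a1 + a2) * rho (a1 + a2) (N1 + N2) := shift (a1 + a2) (N1 + N2)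
  have id1 : a1 * S1 = M1 + a1 * rho a1 N1 := shift a1 N1
  have id2 : a2 * S2 = M2 + a2 * rho a2 N2 := shift a2 N2
  -- key : (M1 * S2 + S1 * M2) * Sw < Mw * (S1 * S2)
  have hmain : rho (a1 + a2) (N1 + N2) / Sw
      < (a1 * rho a1 N1 * S2 + a2 * rho a2 N2 * S1) / ((a1 + a2) * (S1 * S2)) := by
    rw [div_lt_div_iff₀ hSw (by positivity)]
    have e1 : rho (a1 + a2) (N1 + N2) * ((a1 + a2) * (S1 * S2))
        = ((a1 + a2) * Sw - Mw) * (S1 * S2) := by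
      linear_combination (-(S1 * S2)) * idA
    have e2 : (a1 * rho a1 N1 * S2 + a2 * rho a2 N2 * S1) * Sw
        = ((a1 + a2) * (S1 * S2) - (M1 * S2 + S1 * M2)) * Sw := by
      linear_combination (-(S2 * Sw)) * id1 - (S1 * Sw) * id2
    rw [e1, e2]
    nlinarith [key]
  have e3 : (a1 * rho a1 N1 * S2 + a2 * rho a2 N2 * S1) / ((a1 + a2) * (S1 * S2))
      = a1 / (a1 + a2) * (rho a1 N1 / S1) + a2 / (a1 + a2) * (rho a2 N2 / S2) := by
    field_simp
  rw [e3] at hmain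
  have hE : ErlangB (N1 + N2) (a1 + a2) = rho (a1 + a2) (N1 + N2) / Sw := rfl
  have hE1 : ErlangB N1 a1 = rho a1 N1 / S1 := rfl
  have hE2 : ErlangB N2 a2 = rho a2 N2 / S2 := rfl
  rw [hE, hE1, hE2]
  exact hmain
end

section
/- Under the probabilistic sharing model, the function π(n1,n2) = f1(n1)f2(n2)/G, where f_i(n) = a_i^n/n! for n < N_i and f_i(n) = a_i^n x_{-i}^{n-N_i}/n! for N_i ≤ n ≤ N1+N2, and G normalizes over the feasible set M = {(n1,n2) : n1+n2 ≤ N1+N2}, is a probability distribution on M satisfying the detailed balance equations of the corresponding continuous-time Markov chain: for each admissible transition from (n1,n2) to (n1+1,n2), λ1·q(n1,n2)·π(n1,n2) = μ1·(n1+1)·π(n1+1,n2), where q(n1,n2) = 1 if n1 < N1 and q(n1,n2) = x2 if n1 ≥ N1 (and n1+n2 < N1+N2), and symmetrically for the second coordinate. -/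
open Finset

/-- `f N a x n`: the unnormalized marginal factor in the product-form stationary
distribution of the probabilistic sharing model. -/
noncomputable def psFactor (N : ℕ) (a x : ℝ) (n : ℕ) : ℝ :=
  if n < N then a ^ n / (Nat.factorial n : ℝ)
  else a ^ n * x ^ (n - N) / (Nat.factorial n : ℝ)

/-- Feasible states of the two-provider system. -/
def psStates (N1 N2 : ℕ) : Finset (ℕ × ℕ) :=
  (Finset.range (N1 + N2 + 1) ×ˢ Finset.range (N1 + N2 + 1)).filter
    (fun p => p.1 + p.2 ≤ N1 + N2)

/-- Normalization constant `G`. -/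
noncomputable def psG (N1 N2 : ℕ) (a1 a2 x1 x2 : ℝ) : ℝ :=
  ∑ p ∈ psStates N1 N2, psFactor N1 a1 x2 p.1 * psFactor N2 a2 x1 p.2

/-- Stationary distribution `π`. -/
noncomputable def psPi (N1 N2 : ℕ) (a1 a2 x1 x2 : ℝ) (n1 n2 : ℕ) : ℝ :=
  psFactor N1 a1 x2 n1 * psFactor N2 a2 x1 n2 / psG N1 N2 a1 a2 x1 x2

lemma psFactor_pos (N : ℕ) {a x : ℝ} (ha : 0 < a) (hx : 0 < x) (n : ℕ) :
    0 < psFactor N a x n := by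
  unfold psFactor
  have : (0:ℝ) < Nat.factorial n := by positivity
  split <;> positivity

lemma psFactor_succ (N : ℕ) (a x : ℝ) (n : ℕ) :
    ((n:ℝ)+1) * psFactor N a x (n+1) = (if n < N then 1 else x) * a * psFactor N a x n := by
  have hfac : (Nat.factorial (n+1) : ℝ) = ((n:ℝ)+1) * Nat.factorial n := by
    push_cast [Nat.factorial_succ]; ring
  have hf0 : (Nat.factorial n : ℝ) ≠ 0 := Nat.cast_ne_zero.mpr (Nat.factorial_ne_zero n)
  have hn0 : ((n:ℝ)+1) ≠ 0 := by positivity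
  unfold psFactor
  by_cases h : n < N
  · by_cases h2 : n + 1 < N
    · simp only [h, h2, if_true, hfac]
      field_simp
      ring
    · have he : n + 1 - N = 0 := by omega
      simp only [h, h2, if_true, if_false, hfac, he, pow_zero]
      field_simp
      ring
  · have h2 : ¬ (n + 1 < N) := by omega
    have he : n + 1 - N = (n - N) + 1 := by omega
    simp only [h, h2, if_false, hfac, he, pow_succ]
    field_simp

/-- Under the probabilistic sharing model, `π` is a probability distribution on the
feasible states and satisfies the detailed balance equations of the CTMC. -/
theorem probabilistic_sharing_detailed_balance
    (N1 N2 : ℕ) (lam1 lam2 mu1 mu2 a1 a2 x1 x2 : ℝ)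
    (hlam1 : 0 < lam1) (hlam2 : 0 < lam2) (hmu1 : 0 < mu1) (hmu2 : 0 < mu2)
    (ha1 : a1 = lam1 / mu1) (ha2 : a2 = lam2 / mu2)
    (hx1 : x1 ∈ Set.Ioc (0 : ℝ) 1) (hx2 : x2 ∈ Set.Ioc (0 : ℝ) 1) :
    (∀ p ∈ psStates N1 N2, 0 ≤ psPi N1 N2 a1 a2 x1 x2 p.1 p.2) ∧
    (∑ p ∈ psStates N1 N2, psPi N1 N2 a1 a2 x1 x2 p.1 p.2) = 1 ∧
    (∀ n1 n2 : ℕ, n1 + n2 < N1 + N2 →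
      lam1 * (if n1 < N1 then (1 : ℝ) else x2) * psPi N1 N2 a1 a2 x1 x2 n1 n2
        = mu1 * ((n1 : ℝ) + 1) * psPi N1 N2 a1 a2 x1 x2 (n1 + 1) n2) ∧
    (∀ n1 n2 : ℕ, n1 + n2 < N1 + N2 →
      lam2 * (if n2 < N2 then (1 : ℝ) else x1) * psPi N1 N2 a1 a2 x1 x2 n1 n2
        = mu2 * ((n2 : ℝ) + 1) * psPi N1 N2 a1 a2 x1 x2 n1 (n2 + 1)) := by
  obtain ⟨hx1p, _⟩ := hx1
  obtain ⟨hx2p, _⟩ := hx2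
  have ha1p : 0 < a1 := by rw [ha1]; positivity
  have ha2p : 0 < a2 := by rw [ha2]; positivity
  have hGpos : 0 < psG N1 N2 a1 a2 x1 x2 := by
    apply Finset.sum_pos
    · intro p _
      exact mul_pos (psFactor_pos N1 ha1p hx2p p.1) (psFactor_pos N2 ha2p hx1p p.2)
    · exact ⟨(0, 0), by simp [psStates]⟩
  have hGne : psG N1 N2 a1 a2 x1 x2 ≠ 0 := ne_of_gt hGpos
  refine ⟨?_, ?_, ?_, ?_⟩
  · intro p _
    unfold psPi
    exact le_of_lt (div_pos (mul_pos (psFactor_pos N1 ha1p hx2p p.1)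
      (psFactor_pos N2 ha2p hx1p p.2)) hGpos)
  · unfold psPi
    rw [← Finset.sum_div, div_eq_one_iff_eq hGne]
    rfl
  · intro n1 n2 _
    have h : lam1 * (if n1 < N1 then (1:ℝ) else x2) * psFactor N1 a1 x2 n1
        = mu1 * (((n1:ℝ)+1) * psFactor N1 a1 x2 (n1+1)) := by
      rw [psFactor_succ, ha1]
      field_simp
    unfold psPi
    rw [mul_assoc mu1]
    linear_combination (psFactor N2 a2 x1 n2 / psG N1 N2 a1 a2 x1 x2) * h
  · intro n1 n2 _
    have h : lam2 * (if n2 < N2 then (1:ℝ) else x1) * psFactor N2 a2 x1 n2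
        = mu2 * (((n2:ℝ)+1) * psFactor N2 a2 x1 (n2+1)) := by
      rw [psFactor_succ, ha2]
      field_simp
    unfold psPi
    rw [mul_assoc mu2]
    linear_combination (psFactor N1 a1 x2 n1 / psG N1 N2 a1 a2 x1 x2) * h
end

section
/- Under the probabilistic sharing model with sharing parameters (0,0), the blocking probability of provider i equals the standalone Erlang-B value: B_i(0,0) = E(N_i, a_i); and with parameters (1,1) it equals the fully pooled value: B_1(1,1) = B_2(1,1) = E(N1+N2, a1+a2). -/
open Finset

/-- Blocking probability of provider 1 under the probabilistic sharing model. -/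
noncomputable def psB1 (N1 N2 : ℕ) (a1 a2 x1 x2 : ℝ) : ℝ :=
  (1 / psG N1 N2 a1 a2 x1 x2) *
    ((∑ p ∈ (psStates N1 N2).filter (fun p => p.1 + p.2 = N1 + N2),
        psFactor N1 a1 x2 p.1 * psFactor N2 a2 x1 p.2) +
     (1 - x2) * ∑ p ∈ (psStates N1 N2).filter (fun p => N1 ≤ p.1 ∧ p.1 + p.2 < N1 + N2),
        psFactor N1 a1 x2 p.1 * psFactor N2 a2 x1 p.2)

/-- Blocking probability of provider 2 under the probabilistic sharing model. -/
noncomputable def psB2 (N1 N2 : ℕ) (a1 a2 x1 x2 : ℝ) : ℝ :=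
  (1 / psG N1 N2 a1 a2 x1 x2) *
    ((∑ p ∈ (psStates N1 N2).filter (fun p => p.1 + p.2 = N1 + N2),
        psFactor N1 a1 x2 p.1 * psFactor N2 a2 x1 p.2) +
     (1 - x1) * ∑ p ∈ (psStates N1 N2).filter (fun p => N2 ≤ p.2 ∧ p.1 + p.2 < N1 + N2),
        psFactor N1 a1 x2 p.1 * psFactor N2 a2 x1 p.2)

lemma psFactor_zero (N : ℕ) (a : ℝ) (n : ℕ) :
    psFactor N a 0 n = if n ≤ N then a ^ n / (Nat.factorial n : ℝ) else 0 := by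
  unfold psFactor
  rcases lt_trichotomy n N with h | h | h
  · rw [if_pos h, if_pos h.le]
  · subst h; simp
  · rw [if_neg (by omega), if_neg (by omega), zero_pow (by omega), mul_zero, zero_div]

lemma psFactor_one (N : ℕ) (a : ℝ) (n : ℕ) :
    psFactor N a 1 n = a ^ n / (Nat.factorial n : ℝ) := by
  unfold psFactor
  split <;> simp

lemma fiber_sum (N1 N2 k : ℕ) (hk : k ≤ N1 + N2) (a1 a2 : ℝ) :
    ∑ p ∈ (psStates N1 N2).filter (fun p => p.1 + p.2 = k),
      a1 ^ p.1 / (Nat.factorial p.1 : ℝ) * (a2 ^ p.2 / (Nat.factorial p.2 : ℝ))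
    = (a1 + a2) ^ k / (Nat.factorial k : ℝ) := by
  have himg : (psStates N1 N2).filter (fun p => p.1 + p.2 = k)
      = (Finset.range (k + 1)).image (fun j => (j, k - j)) := by
    ext p
    simp only [psStates, Finset.mem_filter, Finset.mem_product, Finset.mem_range,
      Finset.mem_image]
    constructor
    · rintro ⟨⟨⟨h1, h2⟩, h3⟩, h4⟩
      exact ⟨p.1, by omega, by rw [Prod.ext_iff]; refine ⟨by simp, ?_⟩; simp; omega⟩
    · rintro ⟨j, hj, rfl⟩
      simp; omega
  rw [himg, Finset.sum_image (by intro x _ y _ h; exact (Prod.mk.injEq _ _ _ _).mp h |>.1)]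
  rw [add_pow, Finset.sum_div]
  refine Finset.sum_congr rfl fun j hj => ?_
  have hjk : j ≤ k := Nat.lt_succ_iff.mp (Finset.mem_range.mp hj)
  rw [Nat.cast_choose ℝ hjk]
  have h1 : (Nat.factorial j : ℝ) ≠ 0 := Nat.cast_ne_zero.2 (Nat.factorial_ne_zero _)
  have h2 : (Nat.factorial (k - j) : ℝ) ≠ 0 := Nat.cast_ne_zero.2 (Nat.factorial_ne_zero _)
  have h3 : (Nat.factorial k : ℝ) ≠ 0 := Nat.cast_ne_zero.2 (Nat.factorial_ne_zero _)
  field_simp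

lemma psStates_swap (N1 N2 : ℕ) : psStates N2 N1 = psStates N1 N2 := by
  unfold psStates; rw [Nat.add_comm N2 N1]

lemma psB2_eq_psB1 (N1 N2 : ℕ) (a1 a2 x1 x2 : ℝ) :
    psB2 N1 N2 a1 a2 x1 x2 = psB1 N2 N1 a2 a1 x2 x1 := by
  unfold psB1 psB2 psG
  simp only [psStates_swap N1 N2]
  have hG : ∑ p ∈ psStates N1 N2, psFactor N2 a2 x1 p.1 * psFactor N1 a1 x2 p.2
      = ∑ p ∈ psStates N1 N2, psFactor N1 a1 x2 p.1 * psFactor N2 a2 x1 p.2 := by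
    refine Finset.sum_equiv (Equiv.prodComm ℕ ℕ) (fun p => ?_) (fun p _ => ?_)
    · simp only [psStates, Finset.mem_filter, Finset.mem_product, Equiv.prodComm_apply,
        Prod.fst_swap, Prod.snd_swap, Finset.mem_range]
      omega
    · simp [mul_comm]
  have hA : ∑ p ∈ (psStates N1 N2).filter (fun p => p.1 + p.2 = N2 + N1),
        psFactor N2 a2 x1 p.1 * psFactor N1 a1 x2 p.2
      = ∑ p ∈ (psStates N1 N2).filter (fun p => p.1 + p.2 = N1 + N2),
        psFactor N1 a1 x2 p.1 * psFactor N2 a2 x1 p.2 := by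
    refine Finset.sum_equiv (Equiv.prodComm ℕ ℕ) (fun p => ?_) (fun p _ => ?_)
    · simp only [psStates, Finset.mem_filter, Finset.mem_product, Equiv.prodComm_apply,
        Prod.fst_swap, Prod.snd_swap, Finset.mem_range]
      omega
    · simp [mul_comm]
  have hB : ∑ p ∈ (psStates N1 N2).filter (fun p => N2 ≤ p.1 ∧ p.1 + p.2 < N2 + N1),
        psFactor N2 a2 x1 p.1 * psFactor N1 a1 x2 p.2
      = ∑ p ∈ (psStates N1 N2).filter (fun p => N2 ≤ p.2 ∧ p.1 + p.2 < N1 + N2),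
        psFactor N1 a1 x2 p.1 * psFactor N2 a2 x1 p.2 := by
    refine Finset.sum_equiv (Equiv.prodComm ℕ ℕ) (fun p => ?_) (fun p _ => ?_)
    · simp only [psStates, Finset.mem_filter, Finset.mem_product, Equiv.prodComm_apply,
        Prod.fst_swap, Prod.snd_swap, Finset.mem_range]
      omega
    · simp [mul_comm]
  rw [hG, hA, hB]

lemma S_pos (N : ℕ) (a : ℝ) (ha : 0 < a) :
    0 < ∑ j ∈ Finset.range (N + 1), a ^ j / (Nat.factorial j : ℝ) :=
  Finset.sum_pos (fun j _ => div_pos (pow_pos ha j)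
    (Nat.cast_pos.2 (Nat.factorial_pos j))) ⟨0, Finset.mem_range.2 (Nat.succ_pos N)⟩

/-- standalone case, provider 1 side -/
lemma psB1_zero (N1 N2 : ℕ) (a1 a2 : ℝ) (ha1 : 0 < a1) (ha2 : 0 < a2) :
    psB1 N1 N2 a1 a2 0 0 = ErlangB N1 a1 := by
  have h1 : ∀ n, (Nat.factorial n : ℝ) ≠ 0 :=
    fun n => Nat.cast_ne_zero.2 (Nat.factorial_ne_zero _)
  set S1 := ∑ j ∈ Finset.range (N1 + 1), a1 ^ j / (Nat.factorial j : ℝ) with hS1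
  set S2 := ∑ j ∈ Finset.range (N2 + 1), a2 ^ j / (Nat.factorial j : ℝ) with hS2
  have hS1p := S_pos N1 a1 ha1
  have hS2p := S_pos N2 a2 ha2
  -- G
  have hG : psG N1 N2 a1 a2 0 0 = S1 * S2 := by
    unfold psG
    simp_rw [psFactor_zero]
    rw [← Finset.sum_subset (s₁ := Finset.range (N1 + 1) ×ˢ Finset.range (N2 + 1))
      (by
        intro p hp
        simp only [Finset.mem_product, Finset.mem_range] at hp
        simp only [psStates, Finset.mem_filter, Finset.mem_product, Finset.mem_range]
        omega)
      (by
        intro p hp hnp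
        simp only [Finset.mem_product, Finset.mem_range] at hnp
        rcases Nat.lt_or_ge N1 p.1 with h | h
        · have hh : ¬ (p.1 ≤ N1) := by omega
          simp [hh]
        · have hh : ¬ (p.2 ≤ N2) := by omega
          simp [hh])]
    rw [Finset.sum_product, hS1, hS2, Finset.sum_mul_sum]
    refine Finset.sum_congr rfl fun x hx => Finset.sum_congr rfl fun y hy => ?_
    simp only [Finset.mem_range, Nat.lt_succ_iff] at hx hy
    simp [hx, hy]
  -- first numerator sum
  have hA : ∑ p ∈ (psStates N1 N2).filter (fun p => p.1 + p.2 = N1 + N2),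
        psFactor N1 a1 0 p.1 * psFactor N2 a2 0 p.2
      = a1 ^ N1 / (Nat.factorial N1 : ℝ) * (a2 ^ N2 / (Nat.factorial N2 : ℝ)) := by
    simp_rw [psFactor_zero]
    rw [Finset.sum_eq_single_of_mem (⟨N1, N2⟩ : ℕ × ℕ)
      (by simp [psStates])
      (by
        rintro ⟨b1, b2⟩ hb hne
        simp only [Finset.mem_filter] at hb
        have hsum : b1 + b2 = N1 + N2 := hb.2
        rcases Nat.lt_or_ge N1 b1 with h | h
        · have hh : ¬ (b1 ≤ N1) := by omega
          simp [hh]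
        · have : N2 < b2 ∨ (b1 = N1 ∧ b2 = N2) := by omega
          rcases this with h' | ⟨rfl, rfl⟩
          · have hh : ¬ (b2 ≤ N2) := by omega
            simp [hh]
          · exact absurd rfl hne)]
    simp
  -- second numerator sum
  have hB : ∑ p ∈ (psStates N1 N2).filter (fun p => N1 ≤ p.1 ∧ p.1 + p.2 < N1 + N2),
        psFactor N1 a1 0 p.1 * psFactor N2 a2 0 p.2
      = a1 ^ N1 / (Nat.factorial N1 : ℝ) * ∑ j ∈ Finset.range N2, a2 ^ j / (Nat.factorial j : ℝ) := by
    simp_rw [psFactor_zero]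
    rw [← Finset.sum_subset (s₁ := (Finset.range N2).image (fun j => (N1, j)))
      (by
        intro p hp
        simp only [Finset.mem_image, Finset.mem_range] at hp
        obtain ⟨j, hj, rfl⟩ := hp
        simp only [psStates, Finset.mem_filter, Finset.mem_product, Finset.mem_range]
        omega)
      (by
        rintro ⟨b1, b2⟩ hb hnb
        simp only [Finset.mem_filter] at hb
        simp only [Finset.mem_image, Finset.mem_range] at hnb
        rcases Nat.lt_or_ge N1 b1 with h | h
        · have hh : ¬ (b1 ≤ N1) := by omega
          simp [hh]
        · have hb1 : b1 = N1 := le_antisymm h hb.2.1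
          exact absurd ⟨b2, by omega, by rw [hb1]⟩ hnb)]
    rw [Finset.sum_image (by intro x _ y _ h; exact ((Prod.mk.injEq _ _ _ _).mp h).2)]
    rw [Finset.mul_sum]
    refine Finset.sum_congr rfl fun j hj => ?_
    have hj' : j ≤ N2 := le_of_lt (Finset.mem_range.mp hj)
    simp [hj']
  have hsplit : S2 = (∑ j ∈ Finset.range N2, a2 ^ j / (Nat.factorial j : ℝ)) +
      a2 ^ N2 / (Nat.factorial N2 : ℝ) := by
    rw [hS2, Finset.sum_range_succ]
  unfold psB1
  rw [hG, hA, hB, ErlangB, ← hS1]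
  have hcomb : a1 ^ N1 / (Nat.factorial N1 : ℝ) * (a2 ^ N2 / (Nat.factorial N2 : ℝ)) +
      (1 - 0) * (a1 ^ N1 / (Nat.factorial N1 : ℝ) *
        ∑ j ∈ Finset.range N2, a2 ^ j / (Nat.factorial j : ℝ))
      = a1 ^ N1 / (Nat.factorial N1 : ℝ) * S2 := by
    rw [hsplit]; ring
  rw [hcomb]
  have hn1 : S1 ≠ 0 := by rw [hS1]; exact ne_of_gt hS1p
  have hn2 : S2 ≠ 0 := by rw [hS2]; exact ne_of_gt hS2p
  field_simp

lemma psB1_one (N1 N2 : ℕ) (a1 a2 : ℝ) (ha1 : 0 < a1) (ha2 : 0 < a2) :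
    psB1 N1 N2 a1 a2 1 1 = ErlangB (N1 + N2) (a1 + a2) := by
  have ha : 0 < a1 + a2 := by linarith
  have hG : psG N1 N2 a1 a2 1 1
      = ∑ k ∈ Finset.range (N1 + N2 + 1), (a1 + a2) ^ k / (Nat.factorial k : ℝ) := by
    unfold psG
    simp_rw [psFactor_one]
    rw [← Finset.sum_fiberwise_of_maps_to (g := fun p => p.1 + p.2)
      (t := Finset.range (N1 + N2 + 1))
      (by intro p hp; simp only [psStates, Finset.mem_filter] at hp
          simpa using Nat.lt_succ_of_le hp.2)]
    exact Finset.sum_congr rfl fun k hk =>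
      fiber_sum _ _ _ (Nat.lt_succ_iff.mp (Finset.mem_range.mp hk)) _ _
  have hA : ∑ p ∈ (psStates N1 N2).filter (fun p => p.1 + p.2 = N1 + N2),
        psFactor N1 a1 1 p.1 * psFactor N2 a2 1 p.2
      = (a1 + a2) ^ (N1 + N2) / (Nat.factorial (N1 + N2) : ℝ) := by
    simp_rw [psFactor_one]
    exact fiber_sum _ _ _ le_rfl _ _
  unfold psB1
  rw [hG, hA, ErlangB]
  rw [sub_self, zero_mul, add_zero, one_div, inv_mul_eq_div]

theorem psB_extreme_configurations (N1 N2 : ℕ) (a1 a2 : ℝ) (ha1 : 0 < a1) (ha2 : 0 < a2) :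
    psB1 N1 N2 a1 a2 0 0 = ErlangB N1 a1 ∧
    psB2 N1 N2 a1 a2 0 0 = ErlangB N2 a2 ∧
    psB1 N1 N2 a1 a2 1 1 = ErlangB (N1 + N2) (a1 + a2) ∧
    psB2 N1 N2 a1 a2 1 1 = ErlangB (N1 + N2) (a1 + a2) := by
  refine ⟨psB1_zero N1 N2 a1 a2 ha1 ha2, ?_, psB1_one N1 N2 a1 a2 ha1 ha2, ?_⟩
  · rw [psB2_eq_psB1]; exact psB1_zero N2 N1 a2 a1 ha2 ha1
  · rw [psB2_eq_psB1, psB1_one N2 N1 a2 a1 ha2 ha1, Nat.add_comm N2 N1, add_comm a2 a1]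
end

section
/- Key inequality for monotonicity: for every j ∈ {1,…,N2}, v_{1,j}·d - v_j·m1 < 0, where v_{1,j}/v_j = 1 - (N1+j)/a1 and m1/d = E(N1,a1). Equivalently, (1 - (N1+j)/a1) < E(N1,a1) for all j ≥ 1. -/
open Finset

noncomputable def coefM1 (N1 N2 : ℕ) (a1 a2 : ℝ) : ℝ :=
  a1 ^ N1 / (Nat.factorial N1 : ℝ) * ∑ j ∈ Finset.range (N2 + 1), a2 ^ j / (Nat.factorial j : ℝ)

noncomputable def coefV1 (N1 N2 : ℕ) (a1 a2 : ℝ) (j : ℕ) : ℝ :=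
  (1 - ((N1 : ℝ) + j) / a1) * (a1 ^ (N1 + j) / (Nat.factorial (N1 + j) : ℝ)) *
    ∑ i ∈ Finset.range (N2 - j + 1), a2 ^ i / (Nat.factorial i : ℝ)

noncomputable def coefD (N1 N2 : ℕ) (a1 a2 : ℝ) : ℝ :=
  (∑ i ∈ Finset.range (N1 + 1), a1 ^ i / (Nat.factorial i : ℝ)) *
    ∑ j ∈ Finset.range (N2 + 1), a2 ^ j / (Nat.factorial j : ℝ)

noncomputable def coefV (N1 N2 : ℕ) (a1 a2 : ℝ) (j : ℕ) : ℝ :=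
  (a1 ^ (N1 + j) / (Nat.factorial (N1 + j) : ℝ)) *
    ∑ i ∈ Finset.range (N2 - j + 1), a2 ^ i / (Nat.factorial i : ℝ)

/-!
Write `S = ∑_{k ≤ N} a^k/k!`. Shifting the index in `a · S` gives
`a · S = ∑_{k ≤ N} k · a^k/k! + a · a^N/N! ≤ N · S + a · a^N/N!`,
i.e. `1 - N/a ≤ E(N, a)`; any `x > 0` added to `N` makes this strict. The first inequality of
the theorem factors as a positive product times `(1 - (N1 + j)/a1) · S - a1^N1/N1!`.
-/

lemma natCast_succ_mul_pow_div_factorial (a : ℝ) (n : ℕ) :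
    ((n : ℝ) + 1) * (a ^ (n + 1) / (n + 1).factorial) = a * (a ^ n / n.factorial) := by
  rw [Nat.factorial_succ]
  push_cast
  field_simp
  ring

lemma mul_sum_pow_div_factorial (a : ℝ) (N : ℕ) :
    a * ∑ k ∈ range (N + 1), a ^ k / k.factorial =
      ∑ k ∈ range (N + 1), k * (a ^ k / k.factorial) + a * (a ^ N / N.factorial) := by
  induction N with
  | zero => simp
  | succ n ih =>
    rw [sum_range_succ, mul_add, ih, sum_range_succ _ (n + 1), Nat.cast_succ,
      natCast_succ_mul_pow_div_factorial]

lemma sum_pow_div_factorial_pos {a : ℝ} (ha : 0 < a) (N : ℕ) :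
    0 < ∑ k ∈ range (N + 1), a ^ k / k.factorial :=
  sum_pos (fun k _ => by positivity) ⟨0, by simp⟩

lemma sub_mul_sum_pow_div_factorial_le {a : ℝ} (ha : 0 ≤ a) (N : ℕ) :
    (a - N) * ∑ k ∈ range (N + 1), a ^ k / k.factorial ≤ a * (a ^ N / N.factorial) := by
  have hmoments : ∑ k ∈ range (N + 1), k * (a ^ k / k.factorial) ≤
      N * ∑ k ∈ range (N + 1), a ^ k / k.factorial := by
    rw [mul_sum]
    gcongr with k hk
    exact_mod_cast Nat.lt_succ_iff.mp (mem_range.mp hk)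
  linarith [mul_sum_pow_div_factorial a N]

lemma one_sub_div_le_erlangB {a : ℝ} (ha : 0 < a) (N : ℕ) : 1 - N / a ≤ ErlangB N a := by
  have hS := sum_pow_div_factorial_pos ha N
  rw [ErlangB, le_div_iff₀ hS, ← mul_le_mul_iff_of_pos_left ha, ← mul_assoc, mul_one_sub,
    mul_div_cancel₀ _ ha.ne']
  exact sub_mul_sum_pow_div_factorial_le ha.le N

lemma one_sub_add_div_lt_erlangB {a x : ℝ} (ha : 0 < a) (hx : 0 < x) (N : ℕ) :
    1 - (N + x) / a < ErlangB N a := by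
  have : 0 < x / a := div_pos hx ha
  rw [add_div]
  linarith [one_sub_div_le_erlangB ha N]

lemma one_sub_add_div_mul_sum_lt {a x : ℝ} (ha : 0 < a) (hx : 0 < x) (N : ℕ) :
    (1 - (N + x) / a) * ∑ k ∈ range (N + 1), a ^ k / k.factorial < a ^ N / N.factorial :=
  (lt_div_iff₀ (sum_pow_div_factorial_pos ha N)).mp (one_sub_add_div_lt_erlangB ha hx N)

theorem key_inequality_v (N1 N2 : ℕ) (a1 a2 : ℝ) (ha1 : 0 < a1) (ha2 : 0 < a2) :
    (∀ j ∈ Finset.Icc 1 N2,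
      coefV1 N1 N2 a1 a2 j * coefD N1 N2 a1 a2 - coefV N1 N2 a1 a2 j * coefM1 N1 N2 a1 a2 < 0) ∧
    (∀ j : ℕ, 1 ≤ j → 1 - ((N1 : ℝ) + j) / a1 < ErlangB N1 a1) := by
  refine ⟨fun j hj => ?_, fun j hj => one_sub_add_div_lt_erlangB ha1 (by exact_mod_cast hj) N1⟩
  have hj : (0 : ℝ) < j := by exact_mod_cast (mem_Icc.mp hj).1
  have hfactor : coefV1 N1 N2 a1 a2 j * coefD N1 N2 a1 a2 -
        coefV N1 N2 a1 a2 j * coefM1 N1 N2 a1 a2 =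
      coefV N1 N2 a1 a2 j * (∑ i ∈ range (N2 + 1), a2 ^ i / i.factorial) *
        ((1 - (N1 + j) / a1) * ∑ i ∈ range (N1 + 1), a1 ^ i / i.factorial -
          a1 ^ N1 / N1.factorial) := by
    unfold coefV1 coefD coefV coefM1
    ring
  have hV : 0 < coefV N1 N2 a1 a2 j :=
    mul_pos (by positivity) (sum_pow_div_factorial_pos ha2 _)
  rw [hfactor]
  exact mul_neg_of_pos_of_neg (mul_pos hV (sum_pow_div_factorial_pos ha2 N2))
    (sub_neg.mpr (one_sub_add_div_mul_sum_lt ha1 hj N1))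
end

section
/- Key inequality for monotonicity: for all i ∈ {1,…,N1} and j ∈ {1,…,N2}, (1 - (N1+j)/a1) - E(N1-i, a1) < 0, i.e., the term v_{1,j}u_i - v_j u_{1,i} in the derivative expansion is strictly negative. -/
open Finset

noncomputable def coefU1 (N1 N2 : ℕ) (a1 a2 : ℝ) (i : ℕ) : ℝ :=
  a1 ^ (N1 - i) / (Nat.factorial (N1 - i) : ℝ) * (a2 ^ (N2 + i) / (Nat.factorial (N2 + i) : ℝ))

noncomputable def coefU (N1 N2 : ℕ) (a1 a2 : ℝ) (i : ℕ) : ℝ :=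
  (a2 ^ (N2 + i) / (Nat.factorial (N2 + i) : ℝ)) *
    ∑ j ∈ Finset.range (N1 - i + 1), a1 ^ j / (Nat.factorial j : ℝ)

theorem key_inequality_vu (N1 N2 : ℕ) (a1 a2 : ℝ)
    (hN1 : 1 ≤ N1) (ha1 : 0 < a1) (ha2 : 0 < a2) :
    ∀ i ∈ Finset.Icc 1 N1, ∀ j ∈ Finset.Icc 1 N2,
      ((1 - ((N1 : ℝ) + j) / a1) - ErlangB (N1 - i) a1 < 0) ∧
      (coefV1 N1 N2 a1 a2 j * coefU N1 N2 a1 a2 i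
        - coefV N1 N2 a1 a2 j * coefU1 N1 N2 a1 a2 i < 0) := by
  intro i hi j hj
  rw [Finset.mem_Icc] at hi hj
  obtain ⟨hi1, hi2⟩ := hi
  obtain ⟨hj1, hj2⟩ := hj
  set M := N1 - i with hM
  have hSpos : 0 < ∑ k ∈ Finset.range (M + 1), a1 ^ k / (Nat.factorial k : ℝ) :=
    Finset.sum_pos (fun k _ => by positivity) ⟨0, Finset.mem_range.mpr (Nat.succ_pos M)⟩
  set S1 := ∑ k ∈ Finset.range (M + 1), a1 ^ k / (Nat.factorial k : ℝ) with hS1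
  -- carried load bound : a1 * S1 - a1 * T ≤ M * S1
  have hkey : a1 * S1 - a1 * (a1 ^ M / (Nat.factorial M : ℝ)) ≤ (M : ℝ) * S1 := by
    have hsum : a1 * S1 - a1 * (a1 ^ M / (Nat.factorial M : ℝ))
        = ∑ k ∈ Finset.range M, a1 ^ (k + 1) / (Nat.factorial k : ℝ) := by
      rw [hS1, Finset.mul_sum, Finset.sum_range_succ]
      rw [add_sub_cancel_right]
      exact Finset.sum_congr rfl (fun k _ => by rw [pow_succ]; ring
      )
    rw [hsum]
    have hbound : ∑ k ∈ Finset.range M, a1 ^ (k + 1) / (Nat.factorial k : ℝ)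
        ≤ ∑ k ∈ Finset.range M, (M : ℝ) * (a1 ^ (k + 1) / (Nat.factorial (k + 1) : ℝ)) := by
      apply Finset.sum_le_sum
      intro k hk
      have hk' : (k : ℝ) + 1 ≤ (M : ℝ) := by
        exact_mod_cast Nat.succ_le_of_lt (Finset.mem_range.mp hk)
      have hfac : (Nat.factorial (k + 1) : ℝ) = ((k : ℝ) + 1) * (Nat.factorial k : ℝ) := by
        rw [Nat.factorial_succ]; push_cast; ring
      have hfk : (0:ℝ) < (Nat.factorial k : ℝ) := by positivity
      have h2 : a1 ^ (k + 1) / (Nat.factorial k : ℝ)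
          = ((k : ℝ) + 1) * (a1 ^ (k + 1) / (Nat.factorial (k + 1) : ℝ)) := by
        rw [hfac]; field_simp
      rw [h2]
      apply mul_le_mul_of_nonneg_right hk'
      positivity
    refine hbound.trans ?_
    rw [← Finset.mul_sum]
    apply mul_le_mul_of_nonneg_left _ (Nat.cast_nonneg M)
    rw [hS1, Finset.sum_range_succ']
    simp only [pow_zero, Nat.factorial_zero, Nat.cast_one]
    nlinarith [Finset.sum_nonneg (fun k (_ : k ∈ Finset.range M) =>
      le_of_lt (by positivity : (0:ℝ) < a1 ^ (k + 1) / (Nat.factorial (k + 1) : ℝ)))]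
  -- first part
  have hMlt : (M : ℝ) < (N1 : ℝ) + (j : ℝ) := by
    have h1 : (M : ℝ) ≤ (N1 : ℝ) := by exact_mod_cast Nat.sub_le N1 i
    have h2 : (1 : ℝ) ≤ (j : ℝ) := by exact_mod_cast hj1
    linarith
  have hE : ErlangB M a1 = (a1 ^ M / (Nat.factorial M : ℝ)) / S1 := rfl
  have hfirst : (1 - ((N1 : ℝ) + j) / a1) - ErlangB M a1 < 0 := by
    rw [hE]
    have h3 : 1 - (M : ℝ) / a1 ≤ (a1 ^ M / (Nat.factorial M : ℝ)) / S1 := by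
      rw [le_div_iff₀ hSpos]
      have heq2 : (1 - (M : ℝ) / a1) * S1 = (a1 * S1 - (M : ℝ) * S1) / a1 := by
        field_simp
      rw [heq2, div_le_iff₀ ha1]
      nlinarith [hkey]
    have h5 : (M : ℝ) / a1 < ((N1 : ℝ) + j) / a1 :=
      (div_lt_div_iff_of_pos_right ha1).mpr hMlt
    linarith
  refine ⟨hfirst, ?_⟩
  -- second part
  have hVpos : 0 < coefV N1 N2 a1 a2 j := by
    rw [coefV]
    apply mul_pos (by positivity)
    exact Finset.sum_pos (fun k _ => by positivity) ⟨0, Finset.mem_range.mpr (Nat.succ_pos _)⟩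
  have hBpos : 0 < a2 ^ (N2 + i) / (Nat.factorial (N2 + i) : ℝ) := by positivity
  have hcsT : (1 - ((N1 : ℝ) + j) / a1) * S1 - a1 ^ M / (Nat.factorial M : ℝ) < 0 := by
    have heq : (1 - ((N1 : ℝ) + j) / a1) * S1 - a1 ^ M / (Nat.factorial M : ℝ)
        = ((1 - ((N1 : ℝ) + j) / a1) - ErlangB M a1) * S1 := by
      rw [hE]; field_simp
    rw [heq]
    exact mul_neg_of_neg_of_pos hfirst hSpos
  have hdiffeq : coefV1 N1 N2 a1 a2 j * coefU N1 N2 a1 a2 i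
      - coefV N1 N2 a1 a2 j * coefU1 N1 N2 a1 a2 i
      = (coefV N1 N2 a1 a2 j * (a2 ^ (N2 + i) / (Nat.factorial (N2 + i) : ℝ)))
        * ((1 - ((N1 : ℝ) + j) / a1) * S1 - a1 ^ M / (Nat.factorial M : ℝ)) := by
    rw [coefV1, coefU, coefV, coefU1, hS1, hM]
    ring
  rw [hdiffeq]
  exact mul_neg_of_pos_of_neg (mul_pos hVpos hBpos) hcsT
end

section
/- Under the bounded overflow sharing model with integer sharing parameters k1 ∈ {1,…,N1}, k2 ∈ {1,…,N2}, the blocking probability of provider i satisfies the two-sided Erlang-B bounds: E(N_i + k_{-i}, a_i) < B_i(k1,k2) < E(N_i - k_i, a_i). -/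
open Finset

noncomputable def poisTerm (a : ℝ) (n : ℕ) : ℝ := a ^ n / (Nat.factorial n : ℝ)

/-- Feasible states of the bounded overflow model with integer sharing parameters. -/
def boStates (N1 N2 k1 k2 : ℕ) : Finset (ℕ × ℕ) :=
  (Finset.range (N1 + N2 + 1) ×ˢ Finset.range (N1 + N2 + 1)).filter
    (fun p => p.1 ≤ N1 + k2 ∧ p.2 ≤ N2 + k1 ∧ p.1 + p.2 ≤ N1 + N2)

noncomputable def boG (N1 N2 k1 k2 : ℕ) (a1 a2 : ℝ) : ℝ :=
  ∑ p ∈ boStates N1 N2 k1 k2, poisTerm a1 p.1 * poisTerm a2 p.2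

/-- Blocking probability of provider 1 under the bounded overflow model:
sum over `R ∪ C₁` normalized by `G`. -/
noncomputable def boB1 (N1 N2 k1 k2 : ℕ) (a1 a2 : ℝ) : ℝ :=
  (∑ p ∈ (boStates N1 N2 k1 k2).filter
      (fun p => p.1 + p.2 = N1 + N2 ∨ (p.1 = N1 + k2 ∧ p.2 < N2 - k2)),
    poisTerm a1 p.1 * poisTerm a2 p.2) / boG N1 N2 k1 k2 a1 a2

/-- Blocking probability of provider 2 under the bounded overflow model. -/
noncomputable def boB2 (N1 N2 k1 k2 : ℕ) (a1 a2 : ℝ) : ℝ :=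
  (∑ p ∈ (boStates N1 N2 k1 k2).filter
      (fun p => p.1 + p.2 = N1 + N2 ∨ (p.2 = N2 + k1 ∧ p.1 < N1 - k1)),
    poisTerm a1 p.1 * poisTerm a2 p.2) / boG N1 N2 k1 k2 a1 a2

noncomputable def pS (a : ℝ) (N : ℕ) : ℝ := ∑ j ∈ Finset.range (N+1), poisTerm a j

lemma poisTerm_pos (a : ℝ) (ha : 0 < a) (n : ℕ) : 0 < poisTerm a n := by
  unfold poisTerm
  have := Nat.factorial_pos n
  positivity

lemma pS_pos (a : ℝ) (ha : 0 < a) (N : ℕ) : 0 < pS a N :=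
  Finset.sum_pos (fun j _ => poisTerm_pos a ha j) (by simp)

lemma ErlangB_eq (N : ℕ) (a : ℝ) : ErlangB N a = poisTerm a N / pS a N := rfl

lemma erlang_mul (a : ℝ) (ha : 0 < a) (n : ℕ) : ErlangB n a * pS a n = poisTerm a n := by
  rw [ErlangB_eq, div_mul_cancel₀]
  exact (pS_pos a ha n).ne'

lemma poisTerm_succ (a : ℝ) (n : ℕ) : poisTerm a (n+1) = (a / (n+1)) * poisTerm a n := by
  unfold poisTerm
  rw [Nat.factorial_succ, pow_succ]
  have h2 : (Nat.factorial n : ℝ) ≠ 0 := Nat.cast_ne_zero.mpr (Nat.factorial_ne_zero n)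
  push_cast
  field_simp

lemma erlangB_succ_lt (a : ℝ) (ha : 0 < a) (N : ℕ) :
    ErlangB (N+1) a < ErlangB N a := by
  rw [ErlangB_eq, ErlangB_eq, div_lt_div_iff₀ (pS_pos a ha _) (pS_pos a ha _)]
  have key : poisTerm a (N+1) * pS a N ≤
      ∑ j ∈ Finset.range (N+1), poisTerm a N * poisTerm a (j+1) := by
    unfold pS
    rw [Finset.mul_sum]
    apply Finset.sum_le_sum
    intro j hj
    have hj' : j ≤ N := Nat.lt_succ_iff.mp (Finset.mem_range.mp hj)
    rw [poisTerm_succ, poisTerm_succ]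
    have hfj : 0 < poisTerm a j := poisTerm_pos a ha j
    have hfN : 0 < poisTerm a N := poisTerm_pos a ha N
    have hd : a / (N+1 : ℝ) ≤ a / (j+1 : ℝ) := by
      apply div_le_div_of_nonneg_left ha.le (by positivity)
      have : (j:ℝ) ≤ (N:ℝ) := Nat.cast_le.mpr hj'
      linarith
    nlinarith [mul_pos hfN hfj, mul_le_mul_of_nonneg_right hd (mul_pos hfN hfj).le]
  have step2 : ∑ j ∈ Finset.range (N+1), poisTerm a N * poisTerm a (j+1) <
      poisTerm a N * pS a (N+1) := by
    unfold pS
    rw [Finset.mul_sum, Finset.sum_range_succ' (fun i => poisTerm a N * poisTerm a i) (N+1)]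
    have := mul_pos (poisTerm_pos a ha N) (poisTerm_pos a ha 0)
    linarith
  exact lt_of_le_of_lt key step2

lemma erlangB_lt_of_lt (a : ℝ) (ha : 0 < a) {m n : ℕ} (h : m < n) :
    ErlangB n a < ErlangB m a := by
  obtain ⟨d, rfl⟩ : ∃ d, n = m + 1 + d := ⟨n - (m+1), by omega⟩
  clear h
  induction d with
  | zero => exact erlangB_succ_lt a ha m
  | succ d ih => exact (erlangB_succ_lt a ha (m+1+d)).trans ih

lemma erlangB_le_of_le (a : ℝ) (ha : 0 < a) {m n : ℕ} (h : m ≤ n) :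
    ErlangB n a ≤ ErlangB m a := by
  rcases h.lt_or_eq with h' | h'
  · exact (erlangB_lt_of_lt a ha h').le
  · subst h'; exact le_refl _

lemma sandwich (a : ℝ) (ha : 0 < a) (M lo hi : ℕ) (hlh : lo < hi)
    (m : ℕ → ℕ) (w : ℕ → ℝ)
    (hw : ∀ j ∈ Finset.range (M+1), 0 < w j)
    (hm : ∀ j ∈ Finset.range (M+1), lo ≤ m j ∧ m j ≤ hi)
    (j0 j1 : ℕ) (hj0 : j0 ∈ Finset.range (M+1)) (hj1 : j1 ∈ Finset.range (M+1))
    (h0 : m j0 = hi) (h1 : m j1 = lo) :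
    ErlangB hi a < (∑ j ∈ Finset.range (M+1), w j * poisTerm a (m j)) /
      (∑ j ∈ Finset.range (M+1), w j * pS a (m j)) ∧
    (∑ j ∈ Finset.range (M+1), w j * poisTerm a (m j)) /
      (∑ j ∈ Finset.range (M+1), w j * pS a (m j)) < ErlangB lo a := by
  have hDen : 0 < ∑ j ∈ Finset.range (M+1), w j * pS a (m j) :=
    Finset.sum_pos (fun j hj => mul_pos (hw j hj) (pS_pos a ha _)) ⟨j0, hj0⟩
  constructor
  · rw [lt_div_iff₀ hDen, Finset.mul_sum]
    apply Finset.sum_lt_sum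
    · intro j hj
      have hE : ErlangB hi a ≤ ErlangB (m j) a := erlangB_le_of_le a ha (hm j hj).2
      calc ErlangB hi a * (w j * pS a (m j))
          ≤ ErlangB (m j) a * (w j * pS a (m j)) :=
            mul_le_mul_of_nonneg_right hE (mul_pos (hw j hj) (pS_pos a ha _)).le
        _ = w j * poisTerm a (m j) := by
            rw [mul_left_comm, erlang_mul a ha]
    · refine ⟨j1, hj1, ?_⟩
      have hE : ErlangB hi a < ErlangB (m j1) a := by
        rw [h1]; exact erlangB_lt_of_lt a ha hlh
      calc ErlangB hi a * (w j1 * pS a (m j1))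
          < ErlangB (m j1) a * (w j1 * pS a (m j1)) :=
            mul_lt_mul_of_pos_right hE (mul_pos (hw j1 hj1) (pS_pos a ha _))
        _ = w j1 * poisTerm a (m j1) := by
            rw [mul_left_comm, erlang_mul a ha]
  · rw [div_lt_iff₀ hDen, Finset.mul_sum]
    apply Finset.sum_lt_sum
    · intro j hj
      have hE : ErlangB (m j) a ≤ ErlangB lo a := erlangB_le_of_le a ha (hm j hj).1
      calc w j * poisTerm a (m j)
          = ErlangB (m j) a * (w j * pS a (m j)) := by
            rw [mul_left_comm, erlang_mul a ha]
        _ ≤ ErlangB lo a * (w j * pS a (m j)) :=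
            mul_le_mul_of_nonneg_right hE (mul_pos (hw j hj) (pS_pos a ha _)).le
    · refine ⟨j0, hj0, ?_⟩
      have hE : ErlangB (m j0) a < ErlangB lo a := by
        rw [h0]; exact erlangB_lt_of_lt a ha hlh
      calc w j0 * poisTerm a (m j0)
          = ErlangB (m j0) a * (w j0 * pS a (m j0)) := by
            rw [mul_left_comm, erlang_mul a ha]
        _ < ErlangB lo a * (w j0 * pS a (m j0)) :=
            mul_lt_mul_of_pos_right hE (mul_pos (hw j0 hj0) (pS_pos a ha _))

lemma bo_sum_eq_col (N1 N2 k1 k2 : ℕ) (hk1' : k1 ≤ N1) (hk2' : k2 ≤ N2) (g : ℕ → ℕ → ℝ) :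
    ∑ p ∈ boStates N1 N2 k1 k2, g p.1 p.2 =
    ∑ n2 ∈ Finset.range (N2 + k1 + 1),
      ∑ n1 ∈ Finset.range (min (N1 + k2) (N1 + N2 - n2) + 1), g n1 n2 := by
  unfold boStates
  rw [Finset.sum_filter, Finset.sum_product, Finset.sum_comm]
  have hsub : Finset.range (N2+k1+1) ⊆ Finset.range (N1+N2+1) :=
    Finset.range_subset_range.mpr (by omega)
  rw [← Finset.sum_subset hsub ?_]
  · apply Finset.sum_congr rfl
    intro y hy
    have hy' : y < N2+k1+1 := Finset.mem_range.mp hy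
    have hsub2 : Finset.range (min (N1+k2) (N1+N2-y) + 1) ⊆ Finset.range (N1+N2+1) :=
      Finset.range_subset_range.mpr (by omega)
    rw [← Finset.sum_subset hsub2 ?_]
    · apply Finset.sum_congr rfl
      intro x hx
      have hx' : x < min (N1+k2) (N1+N2-y) + 1 := Finset.mem_range.mp hx
      have hcond : x ≤ N1+k2 ∧ y ≤ N2+k1 ∧ x + y ≤ N1+N2 := by omega
      rw [if_pos hcond]
    · intro x hx hx'
      rw [if_neg]
      simp only [Finset.mem_range] at hx hx'
      omega
  · intro y hy hy'
    simp only [Finset.mem_range] at hy hy'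
    apply Finset.sum_eq_zero
    intro x _
    rw [if_neg]
    omega

lemma bo_sum_eq_row (N1 N2 k1 k2 : ℕ) (hk1' : k1 ≤ N1) (hk2' : k2 ≤ N2) (g : ℕ → ℕ → ℝ) :
    ∑ p ∈ boStates N1 N2 k1 k2, g p.1 p.2 =
    ∑ n1 ∈ Finset.range (N1 + k2 + 1),
      ∑ n2 ∈ Finset.range (min (N2 + k1) (N1 + N2 - n1) + 1), g n1 n2 := by
  unfold boStates
  rw [Finset.sum_filter, Finset.sum_product]
  have hsub : Finset.range (N1+k2+1) ⊆ Finset.range (N1+N2+1) :=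
    Finset.range_subset_range.mpr (by omega)
  rw [← Finset.sum_subset hsub ?_]
  · apply Finset.sum_congr rfl
    intro x hx
    have hx' : x < N1+k2+1 := Finset.mem_range.mp hx
    have hsub2 : Finset.range (min (N2+k1) (N1+N2-x) + 1) ⊆ Finset.range (N1+N2+1) :=
      Finset.range_subset_range.mpr (by omega)
    rw [← Finset.sum_subset hsub2 ?_]
    · apply Finset.sum_congr rfl
      intro y hy
      have hy' : y < min (N2+k1) (N1+N2-x) + 1 := Finset.mem_range.mp hy
      have hcond : x ≤ N1+k2 ∧ y ≤ N2+k1 ∧ x + y ≤ N1+N2 := by omega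
      rw [if_pos hcond]
    · intro y hy hy'
      rw [if_neg]
      simp only [Finset.mem_range] at hy hy'
      omega
  · intro x hx hx'
    simp only [Finset.mem_range] at hx hx'
    apply Finset.sum_eq_zero
    intro y _
    rw [if_neg]
    omega

lemma bo_num1_eq (N1 N2 k1 k2 : ℕ) (hk1' : k1 ≤ N1) (hk2' : k2 ≤ N2) (g : ℕ → ℕ → ℝ) :
    ∑ p ∈ (boStates N1 N2 k1 k2).filter
      (fun p => p.1 + p.2 = N1 + N2 ∨ (p.1 = N1 + k2 ∧ p.2 < N2 - k2)), g p.1 p.2 =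
    ∑ n2 ∈ Finset.range (N2 + k1 + 1), g (min (N1 + k2) (N1 + N2 - n2)) n2 := by
  unfold boStates
  rw [Finset.filter_filter, Finset.sum_filter, Finset.sum_product, Finset.sum_comm]
  have hsub : Finset.range (N2+k1+1) ⊆ Finset.range (N1+N2+1) :=
    Finset.range_subset_range.mpr (by omega)
  rw [← Finset.sum_subset hsub ?_]
  · apply Finset.sum_congr rfl
    intro y hy
    have hy' : y < N2+k1+1 := Finset.mem_range.mp hy
    have hiff : ∀ x, ((x ≤ N1+k2 ∧ y ≤ N2+k1 ∧ x + y ≤ N1+N2) ∧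
        (x + y = N1+N2 ∨ (x = N1+k2 ∧ y < N2 - k2))) ↔ x = min (N1+k2) (N1+N2-y) := by
      intro x; omega
    calc ∑ x ∈ Finset.range (N1+N2+1),
          (if (x ≤ N1+k2 ∧ y ≤ N2+k1 ∧ x + y ≤ N1+N2) ∧
            (x + y = N1+N2 ∨ (x = N1+k2 ∧ y < N2 - k2)) then g x y else 0)
        = ∑ x ∈ Finset.range (N1+N2+1),
            (if x = min (N1+k2) (N1+N2-y) then g x y else 0) := by
          apply Finset.sum_congr rfl
          intro x _
          exact if_congr (hiff x) rfl rfl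
      _ = g (min (N1+k2) (N1+N2-y)) y := by
          rw [Finset.sum_ite_eq' (Finset.range (N1+N2+1)) (min (N1+k2) (N1+N2-y))
            (fun x => g x y), if_pos (Finset.mem_range.mpr (by omega))]
  · intro y hy hy'
    simp only [Finset.mem_range] at hy hy'
    apply Finset.sum_eq_zero
    intro x _
    rw [if_neg]
    omega

lemma bo_num2_eq (N1 N2 k1 k2 : ℕ) (hk1' : k1 ≤ N1) (hk2' : k2 ≤ N2) (g : ℕ → ℕ → ℝ) :
    ∑ p ∈ (boStates N1 N2 k1 k2).filter
      (fun p => p.1 + p.2 = N1 + N2 ∨ (p.2 = N2 + k1 ∧ p.1 < N1 - k1)), g p.1 p.2 =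
    ∑ n1 ∈ Finset.range (N1 + k2 + 1), g n1 (min (N2 + k1) (N1 + N2 - n1)) := by
  unfold boStates
  rw [Finset.filter_filter, Finset.sum_filter, Finset.sum_product]
  have hsub : Finset.range (N1+k2+1) ⊆ Finset.range (N1+N2+1) :=
    Finset.range_subset_range.mpr (by omega)
  rw [← Finset.sum_subset hsub ?_]
  · apply Finset.sum_congr rfl
    intro x hx
    have hx' : x < N1+k2+1 := Finset.mem_range.mp hx
    have hiff : ∀ y, ((x ≤ N1+k2 ∧ y ≤ N2+k1 ∧ x + y ≤ N1+N2) ∧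
        (x + y = N1+N2 ∨ (y = N2+k1 ∧ x < N1 - k1))) ↔ y = min (N2+k1) (N1+N2-x) := by
      intro y; omega
    calc ∑ y ∈ Finset.range (N1+N2+1),
          (if (x ≤ N1+k2 ∧ y ≤ N2+k1 ∧ x + y ≤ N1+N2) ∧
            (x + y = N1+N2 ∨ (y = N2+k1 ∧ x < N1 - k1)) then g x y else 0)
        = ∑ y ∈ Finset.range (N1+N2+1),
            (if y = min (N2+k1) (N1+N2-x) then g x y else 0) := by
          apply Finset.sum_congr rfl
          intro y _
          exact if_congr (hiff y) rfl rfl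
      _ = g x (min (N2+k1) (N1+N2-x)) := by
          rw [Finset.sum_ite_eq' (Finset.range (N1+N2+1)) (min (N2+k1) (N1+N2-x))
            (fun y => g x y), if_pos (Finset.mem_range.mpr (by omega))]
  · intro x hx hx'
    simp only [Finset.mem_range] at hx hx'
    apply Finset.sum_eq_zero
    intro y _
    rw [if_neg]
    omega

theorem bo_blocking_two_sided_bounds (N1 N2 k1 k2 : ℕ) (a1 a2 : ℝ)
    (ha1 : 0 < a1) (ha2 : 0 < a2)
    (hk1 : 1 ≤ k1) (hk1' : k1 ≤ N1) (hk2 : 1 ≤ k2) (hk2' : k2 ≤ N2) :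
    (ErlangB (N1 + k2) a1 < boB1 N1 N2 k1 k2 a1 a2 ∧
      boB1 N1 N2 k1 k2 a1 a2 < ErlangB (N1 - k1) a1) ∧
    (ErlangB (N2 + k1) a2 < boB2 N1 N2 k1 k2 a1 a2 ∧
      boB2 N1 N2 k1 k2 a1 a2 < ErlangB (N2 - k2) a2) := by
  have hG1 : boG N1 N2 k1 k2 a1 a2 =
      ∑ j ∈ Finset.range (N2+k1+1),
        poisTerm a2 j * pS a1 (min (N1+k2) (N1+N2-j)) := by
    unfold boG
    rw [bo_sum_eq_col N1 N2 k1 k2 hk1' hk2' (fun n1 n2 => poisTerm a1 n1 * poisTerm a2 n2)]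
    apply Finset.sum_congr rfl
    intro j _
    rw [← Finset.sum_mul, mul_comm]
    rfl
  have hN1 : (∑ p ∈ (boStates N1 N2 k1 k2).filter
      (fun p => p.1 + p.2 = N1 + N2 ∨ (p.1 = N1 + k2 ∧ p.2 < N2 - k2)),
      poisTerm a1 p.1 * poisTerm a2 p.2) =
      ∑ j ∈ Finset.range (N2+k1+1),
        poisTerm a2 j * poisTerm a1 (min (N1+k2) (N1+N2-j)) := by
    rw [bo_num1_eq N1 N2 k1 k2 hk1' hk2' (fun n1 n2 => poisTerm a1 n1 * poisTerm a2 n2)]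
    exact Finset.sum_congr rfl (fun j _ => mul_comm _ _)
  have hG2 : boG N1 N2 k1 k2 a1 a2 =
      ∑ j ∈ Finset.range (N1+k2+1),
        poisTerm a1 j * pS a2 (min (N2+k1) (N1+N2-j)) := by
    unfold boG
    rw [bo_sum_eq_row N1 N2 k1 k2 hk1' hk2' (fun n1 n2 => poisTerm a1 n1 * poisTerm a2 n2)]
    apply Finset.sum_congr rfl
    intro j _
    rw [← Finset.mul_sum]
    rfl
  have hN2 : (∑ p ∈ (boStates N1 N2 k1 k2).filter
      (fun p => p.1 + p.2 = N1 + N2 ∨ (p.2 = N2 + k1 ∧ p.1 < N1 - k1)),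
      poisTerm a1 p.1 * poisTerm a2 p.2) =
      ∑ j ∈ Finset.range (N1+k2+1),
        poisTerm a1 j * poisTerm a2 (min (N2+k1) (N1+N2-j)) := by
    exact bo_num2_eq N1 N2 k1 k2 hk1' hk2' (fun n1 n2 => poisTerm a1 n1 * poisTerm a2 n2)
  constructor
  · have h := sandwich a1 ha1 (N2+k1) (N1-k1) (N1+k2) (by omega)
      (fun j => min (N1+k2) (N1+N2-j)) (fun j => poisTerm a2 j)
      (fun j _ => poisTerm_pos a2 ha2 j)
      (fun j hj => by simp only [Finset.mem_range] at hj; beta_reduce; omega)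
      0 (N2+k1) (Finset.mem_range.mpr (by omega)) (Finset.mem_range.mpr (by omega))
      (by beta_reduce; omega) (by beta_reduce; omega)
    unfold boB1
    rw [hN1, hG1]
    exact h
  · have h := sandwich a2 ha2 (N1+k2) (N2-k2) (N2+k1) (by omega)
      (fun j => min (N2+k1) (N1+N2-j)) (fun j => poisTerm a1 j)
      (fun j _ => poisTerm_pos a1 ha1 j)
      (fun j hj => by simp only [Finset.mem_range] at hj; beta_reduce; omega)
      0 (N1+k2) (Finset.mem_range.mpr (by omega)) (Finset.mem_range.mpr (by omega))
      (by beta_reduce; omega) (by beta_reduce; omega)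
    unfold boB2
    rw [hN2, hG2]
    exact h
end

section
/- Let X ~ Poisson(a_N) where a_N = N - β√N + o(√N) (equivalently (1 - a_N/N)√N → β as N → ∞) for a fixed real β. Then √N · P(X = N) → φ(β) as N → ∞, where φ is the standard normal density. -/
open Filter Real

/-- Standard normal density. -/
noncomputable def stdNormalPDF (x : ℝ) : ℝ := (1 / Real.sqrt (2 * Real.pi)) * Real.exp (-x ^ 2 / 2)

lemma aux_sqrt_atTop : Tendsto (fun N : ℕ => Real.sqrt N) atTop atTop := by
  have h := (tendsto_rpow_atTop one_half_pos).comp tendsto_natCast_atTop_atTop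
  exact h.congr fun N => (Real.sqrt_eq_rpow _).symm

lemma aux_sqrtinv : Tendsto (fun N : ℕ => (Real.sqrt N)⁻¹) atTop (nhds 0) :=
  aux_sqrt_atTop.inv_tendsto_atTop

lemma aux_stirling : Tendsto (fun N : ℕ => Real.sqrt N * Real.exp (-(N:ℝ)) * (N:ℝ) ^ N / (Nat.factorial N : ℝ)) atTop (nhds (1 / Real.sqrt (2 * Real.pi))) := by
  have hπ : Real.sqrt Real.pi ≠ 0 := by positivity
  have h1 : Tendsto (fun N => (Stirling.stirlingSeq N)⁻¹) atTop (nhds (Real.sqrt Real.pi)⁻¹) :=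
    Stirling.tendsto_stirlingSeq_sqrt_pi.inv₀ hπ
  have h2 := h1.const_mul (Real.sqrt 2)⁻¹
  have hlim : (Real.sqrt 2)⁻¹ * (Real.sqrt Real.pi)⁻¹ = 1 / Real.sqrt (2 * Real.pi) := by
    rw [Real.sqrt_mul (by norm_num : (0:ℝ) ≤ 2)]
    rw [one_div, mul_inv]
  rw [hlim] at h2
  apply h2.congr'
  filter_upwards [eventually_ge_atTop 1] with N hN
  have hN0 : (0:ℝ) < N := by exact_mod_cast hN
  rw [Stirling.stirlingSeq]
  rw [Real.sqrt_mul (by norm_num : (0:ℝ) ≤ 2)]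
  have hf : (0:ℝ) < (Nat.factorial N : ℝ) := by positivity
  have hs2 : (0:ℝ) < Real.sqrt 2 := by positivity
  have hsN : (0:ℝ) < Real.sqrt N := Real.sqrt_pos.mpr hN0
  have he : Real.exp 1 ^ N = Real.exp N := by
    rw [← Real.exp_nat_mul]; simp
  have hpow : ((N:ℝ) / Real.exp 1) ^ N = (N:ℝ) ^ N * Real.exp (-(N:ℝ)) := by
    rw [div_pow, he, Real.exp_neg, div_eq_mul_inv]
  rw [hpow]
  have hexp : Real.exp (-(N:ℝ)) > 0 := Real.exp_pos _
  field_simp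

theorem poisson_pmf_sqrt_limit_aux (a : ℕ → ℝ) (β : ℝ)
    (hpos : ∀ N, 0 < a N)
    (hscale : Tendsto (fun N : ℕ => (1 - a N / N) * Real.sqrt N) atTop (nhds β)) :
    Tendsto (fun N : ℕ =>
        Real.sqrt N * (Real.exp (-(a N)) * (a N) ^ N / (Nat.factorial N : ℝ)))
      atTop (nhds ((1 / Real.sqrt (2 * Real.pi)) * Real.exp (-β ^ 2 / 2))) := by
  set t : ℕ → ℝ := fun N => a N / N - 1 with htdef
  have hts : Tendsto (fun N => t N * Real.sqrt N) atTop (nhds (-β)) := by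
    refine hscale.neg.congr fun N => ?_
    simp only [htdef]; ring
  have ht0 : Tendsto t atTop (nhds 0) := by
    have h := hts.mul aux_sqrtinv
    rw [mul_zero] at h
    refine h.congr' ?_
    filter_upwards [eventually_ge_atTop 1] with N hN
    have hs : Real.sqrt N ≠ 0 :=
      ne_of_gt (Real.sqrt_pos.mpr (by exact_mod_cast hN))
    field_simp
  have hNt2 : Tendsto (fun N => (t N * Real.sqrt N) ^ 2 / 2) atTop (nhds (β ^ 2 / 2)) := by
    have := (hts.pow 2).div_const 2
    rwa [neg_pow, show (-1:ℝ)^2 * β^2 = β^2 by ring] at this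
  -- error term
  have herr : Tendsto (fun N : ℕ =>
      (N:ℝ) * (Real.log (1 + t N) - t N) + (t N * Real.sqrt N) ^ 2 / 2) atTop (nhds 0) := by
    have hg : Tendsto (fun N : ℕ => 2 * (|t N * Real.sqrt N| ^ 3 * (Real.sqrt N)⁻¹))
        atTop (nhds 0) := by
      have := ((hts.abs.pow 3).mul aux_sqrtinv).const_mul 2
      rwa [mul_zero, mul_zero] at this
    refine squeeze_zero_norm' ?_ hg
    have h12 := NormedAddCommGroup.tendsto_nhds_zero.mp ht0 (1/2) (by norm_num)
    filter_upwards [eventually_ge_atTop 1, h12] with N hN ht12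
    have hN0 : (0:ℝ) < N := by exact_mod_cast hN
    have hsN : (0:ℝ) < Real.sqrt N := Real.sqrt_pos.mpr hN0
    rw [Real.norm_eq_abs] at ht12
    have habs : |(-(t N))| < 1 := by rw [abs_neg]; linarith
    have key := Real.abs_log_sub_add_sum_range_le habs 2
    rw [abs_neg] at key
    have hsum : (∑ i ∈ Finset.range 2, (-(t N)) ^ (i + 1) / (i + 1)) = -(t N) + t N ^ 2 / 2 := by
      simp [Finset.sum_range_succ]; ring
    rw [hsum, sub_neg_eq_add] at key
    have hsq : (t N * Real.sqrt N) ^ 2 = t N ^ 2 * N := by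
      rw [mul_pow, Real.sq_sqrt hN0.le]
    have hcube : |t N * Real.sqrt N| ^ 3 * (Real.sqrt N)⁻¹ = |t N| ^ 3 * N := by
      rw [abs_mul, abs_of_pos hsN, mul_pow]
      have : Real.sqrt N ^ 3 = N * Real.sqrt N := by
        rw [pow_succ, Real.sq_sqrt hN0.le]
      rw [this]
      field_simp
    rw [Real.norm_eq_abs, hsq]
    have heq : (N:ℝ) * (Real.log (1 + t N) - t N) + t N ^ 2 * N / 2
        = N * ((-(t N) + t N ^ 2 / 2) + Real.log (1 + t N)) := by ring
    rw [heq, abs_mul, abs_of_pos hN0, hcube]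
    have hden : (1:ℝ) / 2 ≤ 1 - |t N| := by linarith
    have h2 : |t N| ^ (2+1) / (1 - |t N|) ≤ 2 * |t N| ^ 3 := by
      rw [div_le_iff₀ (by linarith)]
      norm_num
      nlinarith [pow_nonneg (abs_nonneg (t N)) 3]
    calc (N:ℝ) * |(-(t N) + t N ^ 2 / 2) + Real.log (1 + t N)|
        ≤ N * (|t N| ^ (2+1) / (1 - |t N|)) := by
          exact mul_le_mul_of_nonneg_left key hN0.le
      _ ≤ N * (2 * |t N| ^ 3) := mul_le_mul_of_nonneg_left h2 hN0.le
      _ = 2 * (|t N| ^ 3 * N) := by ring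
  have hexp : Tendsto (fun N : ℕ => (N:ℝ) * (Real.log (1 + t N) - t N)) atTop
      (nhds (-β ^ 2 / 2)) := by
    have h := herr.sub hNt2
    rw [zero_sub, show -(β ^ 2 / 2) = -β ^ 2 / 2 by ring] at h
    exact h.congr fun N => by ring
  have hfin := aux_stirling.mul (Real.continuous_exp.continuousAt.tendsto.comp hexp)
  refine hfin.congr' ?_
  filter_upwards [eventually_ge_atTop 1] with N hN
  have hN0 : (0:ℝ) < N := by exact_mod_cast hN
  have hx : (1:ℝ) + t N = a N / N := by simp only [htdef]; ring
  have hxpos : 0 < a N / N := div_pos (hpos N) hN0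
  have hlog : Real.exp ((N:ℝ) * Real.log (a N / N)) = (a N / N) ^ N := by
    rw [Real.exp_nat_mul, Real.exp_log hxpos]
  have hkey : (N:ℝ) * (Real.log (1 + t N) - t N)
      = (N:ℝ) * Real.log (a N / N) + ((N:ℝ) - a N) := by
    rw [hx]; simp only [htdef]; field_simp; ring
  simp only [Function.comp]
  rw [hkey, Real.exp_add, hlog, Real.exp_sub, div_pow]
  have hF : (0:ℝ) < (Nat.factorial N : ℝ) := by positivity
  have hNN : ((N:ℝ)) ^ N ≠ 0 := by positivity
  rw [Real.exp_neg (a N), Real.exp_neg (N:ℝ)]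
  field_simp


/-- Local CLT / Stirling asymptotics for the Poisson pmf at its (shifted) mean:
if `a N = N - β√N + o(√N)` then `√N · P(Poisson(a N) = N) → φ(β)`. -/
theorem poisson_pmf_sqrt_limit (a : ℕ → ℝ) (β : ℝ)
    (hpos : ∀ N, 0 < a N)
    (hscale : Tendsto (fun N : ℕ => (1 - a N / N) * Real.sqrt N) atTop (nhds β)) :
    Tendsto (fun N : ℕ =>
        Real.sqrt N * (Real.exp (-(a N)) * (a N) ^ N / (Nat.factorial N : ℝ)))
      atTop (nhds (stdNormalPDF β)) := by
  unfold stdNormalPDF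
  exact poisson_pmf_sqrt_limit_aux a β hpos hscale
end

section
/- Under the square-root (QED) scaling a_N = N + β√N + o(√N) with β ∈ ℝ, the Erlang-B blocking probability satisfies √N · E(N, a_N) → φ(β)/(1 - Φ(β)) as N → ∞, where φ and Φ are the standard normal density and CDF. -/
open Filter Real MeasureTheory

/-- Standard normal CDF. -/
noncomputable def stdNormalCDF (x : ℝ) : ℝ := ∫ t in Set.Iic x, stdNormalPDF t

/-!
Writing `P j = a ^ j / j!`, the reciprocal of `E(N, a)` is `∑_{k ≤ N} P (N - k) / P N`
`= ∑_{k ≤ N} ∏_{i < k} (N - i) / a`, so `(√N E(N, a))⁻¹` is the integral over `(0, ∞)` of the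
step function whose value at `t` is the `k`-th summand, `k = ⌊t √N⌋`. In the QED regime each factor
is `1 + O(N^{-1/2})` and there are `O(√N)` of them, so the logarithm of the product is its
first-order part `∑_{i < k} (N - i - a) / a + o(1) → -β t - t² / 2`. The step functions are
dominated by a Gaussian uniformly in `N`, and dominated convergence gives
`(√N E(N, a))⁻¹ → ∫₀^∞ exp (-β t - t² / 2) dt = (1 - Φ β) / φ β` (substitute `s = t + β`).
-/

open Finset Topology ProbabilityTheory

lemma abs_log_one_add_sub_self_le {x : ℝ} (hx : |x| ≤ 1 / 2) :
    |log (1 + x) - x| ≤ 2 * x ^ 2 := by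
  have h := abs_log_sub_add_sum_range_le (x := -x) (by rw [abs_neg]; linarith) 1
  rw [abs_neg] at h
  simp only [range_one, sum_singleton, zero_add, pow_one, Nat.cast_zero, div_one,
    sub_neg_eq_add] at h
  calc |log (1 + x) - x| = |-x + log (1 + x)| := by ring_nf
    _ ≤ |x| ^ 2 / (1 - |x|) := h
    _ ≤ 2 * x ^ 2 := by
      rw [div_le_iff₀ (by linarith), sq_abs]
      nlinarith [sq_nonneg x]

lemma tendsto_prod_one_add_of_tendsto_sum {ι α : Type*} {l : Filter ι} {s : ι → Finset α}
    {x : ι → α → ℝ} {b : ι → ℝ} {L : ℝ}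
    (hxb : ∀ᶠ n in l, ∀ i ∈ s n, |x n i| ≤ b n) (hb : Tendsto b l (𝓝 0))
    (hsb : Tendsto (fun n => #(s n) * b n ^ 2) l (𝓝 0))
    (hsum : Tendsto (fun n => ∑ i ∈ s n, x n i) l (𝓝 L)) :
    Tendsto (fun n => ∏ i ∈ s n, (1 + x n i)) l (𝓝 (exp L)) := by
  have hsmall : ∀ᶠ n in l, ∀ i ∈ s n, |x n i| ≤ 1 / 2 := by
    filter_upwards [hxb, hb.eventually_le_const (by norm_num : (0 : ℝ) < 1 / 2)]
      with n hn hbn i hi using (hn i hi).trans hbn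
  have herr : ∀ᶠ n in l, |∑ i ∈ s n, log (1 + x n i) - ∑ i ∈ s n, x n i|
      ≤ 2 * (#(s n) * b n ^ 2) := by
    filter_upwards [hxb, hsmall] with n hn hn'
    rw [← sum_sub_distrib]
    calc _ ≤ ∑ i ∈ s n, |log (1 + x n i) - x n i| := abs_sum_le_sum_abs _ _
      _ ≤ ∑ _i ∈ s n, 2 * b n ^ 2 := by
        refine sum_le_sum fun i hi => (abs_log_one_add_sub_self_le (hn' i hi)).trans ?_
        rw [← sq_abs]
        gcongr
        exact hn i hi
      _ = 2 * (#(s n) * b n ^ 2) := by rw [sum_const, nsmul_eq_mul]; ring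
  have hlog : Tendsto (fun n => ∑ i ∈ s n, log (1 + x n i)) l (𝓝 L) := by
    have h0 : Tendsto (fun n => ∑ i ∈ s n, log (1 + x n i) - ∑ i ∈ s n, x n i) l (𝓝 0) :=
      squeeze_zero_norm' herr (by simpa using hsb.const_mul 2)
    simpa using h0.add hsum
  refine ((continuous_exp.tendsto L).comp hlog).congr' ?_
  filter_upwards [hsmall] with n hn
  rw [Function.comp_apply, exp_sum]
  refine prod_congr rfl fun i hi => exp_log ?_
  linarith [neg_abs_le (x n i), hn i hi]

lemma integral_Ioi_comp_floor_mul {f : ℕ → ℝ} {n : ℕ} (hf : ∀ k, n ≤ k → f k = 0) {c : ℝ}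
    (hc : 0 < c) : ∫ t in Set.Ioi (0 : ℝ), f ⌊t * c⌋₊ = (∑ k ∈ range n, f k) / c := by
  have hstep : ∀ t ∈ Set.Ici (0 : ℝ),
      f ⌊t * c⌋₊ = ∑ k ∈ range n, (Set.Ico (k / c) ((k + 1) / c)).indicator (fun _ => f k) t := by
    intro t ht
    have hmem : ∀ k : ℕ, t ∈ Set.Ico (k / c) ((k + 1) / c) ↔ ⌊t * c⌋₊ = k := by
      intro k
      rw [Nat.floor_eq_iff (mul_nonneg ht hc.le), Set.mem_Ico, div_le_iff₀ hc, lt_div_iff₀ hc]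
    simp only [Set.indicator, hmem, sum_ite_eq, mem_range]
    split_ifs with h
    · rfl
    · exact hf _ (not_lt.mp h)
  rw [← integral_Ici_eq_integral_Ioi, setIntegral_congr_fun measurableSet_Ici hstep,
    setIntegral_eq_integral_of_forall_compl_eq_zero, integral_finsetSum, sum_div]
  · refine sum_congr rfl fun k _ => ?_
    rw [integral_indicator_const _ measurableSet_Ico, volume_real_Ico_of_le (by gcongr; linarith),
      smul_eq_mul]
    field_simp
    ring
  · exact fun k _ => (integrableOn_const (by simp)).integrable_indicator measurableSet_Ico
  · intro t ht
    refine sum_eq_zero fun k _ => Set.indicator_of_notMem (fun hk => ht ?_) _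
    exact (div_nonneg k.cast_nonneg hc.le).trans hk.1

lemma integrable_exp_mul_sub_sq_div {b : ℝ} (hb : 0 < b) (c : ℝ) :
    Integrable fun t => exp (c * t - t ^ 2 / b) := by
  have h := ((integrable_exp_neg_mul_sq (inv_pos.mpr hb)).comp_sub_right (b * c / 2)).const_mul
    (exp (b * c ^ 2 / 4))
  refine h.congr (Eventually.of_forall fun t => ?_)
  simp only [← exp_add]
  congr 1
  field_simp
  ring

lemma stdNormalPDF_eq_gaussianPDFReal : stdNormalPDF = gaussianPDFReal 0 1 := by
  ext x
  simp [stdNormalPDF, gaussianPDFReal]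

lemma stdNormalPDF_add (β t : ℝ) :
    stdNormalPDF (t + β) = stdNormalPDF β * exp (-β * t - t ^ 2 / 2) := by
  rw [stdNormalPDF, stdNormalPDF, mul_assoc, ← exp_add]
  ring_nf

lemma one_sub_stdNormalCDF (β : ℝ) :
    1 - stdNormalCDF β = stdNormalPDF β * ∫ t in Set.Ioi 0, exp (-β * t - t ^ 2 / 2) := by
  have hint : Integrable stdNormalPDF := by
    rw [stdNormalPDF_eq_gaussianPDFReal]
    exact integrable_gaussianPDFReal 0 1
  have htotal : ∫ x, stdNormalPDF x = 1 := by
    rw [stdNormalPDF_eq_gaussianPDFReal]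
    exact integral_gaussianPDFReal_eq_one 0 one_ne_zero
  have hshift : ∫ t in Set.Ioi 0, stdNormalPDF (t + β) = ∫ s in Set.Ioi β, stdNormalPDF s := by
    simpa using (measurePreserving_add_right volume β).setIntegral_preimage_emb
      (measurableEmbedding_addRight β) stdNormalPDF (Set.Ioi β)
  rw [← htotal, ← intervalIntegral.integral_Iic_add_Ioi hint.integrableOn hint.integrableOn,
    stdNormalCDF, add_sub_cancel_left, ← hshift, ← integral_const_mul]
  simp only [stdNormalPDF_add]

/-- The ratio of the `(N - k)`-th to the `N`-th term of the Erlang-B denominator. -/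
noncomputable def erlangTerm (N : ℕ) (a : ℝ) (k : ℕ) : ℝ := N.descFactorial k / a ^ k

lemma erlangTerm_nonneg {N : ℕ} {a : ℝ} (ha : 0 ≤ a) (k : ℕ) : 0 ≤ erlangTerm N a k := by
  unfold erlangTerm
  positivity

lemma erlangTerm_eq_zero {N k : ℕ} (hk : N < k) (a : ℝ) : erlangTerm N a k = 0 := by
  simp [erlangTerm, Nat.descFactorial_eq_zero_iff_lt.mpr hk]

lemma erlangTerm_eq_prod (N k : ℕ) {a : ℝ} (ha : a ≠ 0) :
    erlangTerm N a k = ∏ i ∈ range k, (1 + (N - i - a) / a) := by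
  rw [erlangTerm, ← descPochhammer_eval_eq_descFactorial, descPochhammer_eval_eq_prod_range,
    div_eq_mul_inv, ← inv_pow, ← card_range k, ← prod_const, card_range, ← prod_mul_distrib]
  refine prod_congr rfl fun i _ => ?_
  field_simp
  ring

lemma erlangB_eq_inv_sum (N : ℕ) {a : ℝ} (ha : a ≠ 0) :
    ErlangB N a = (∑ k ∈ range (N + 1), erlangTerm N a k)⁻¹ := by
  have hterm : ∀ k ∈ range (N + 1),
      a ^ (N + 1 - 1 - k) / (N + 1 - 1 - k).factorial = a ^ N / N.factorial * erlangTerm N a k := by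
    intro k hk
    have hkN : k ≤ N := Nat.lt_succ_iff.mp (mem_range.mp hk)
    rw [Nat.add_sub_cancel, erlangTerm, ← Nat.factorial_mul_descFactorial hkN, Nat.cast_mul,
      ← pow_sub_mul_pow a hkN]
    have : (N.descFactorial k : ℝ) ≠ 0 := by
      exact_mod_cast (Nat.descFactorial_pos.mpr hkN).ne'
    field_simp
  rw [ErlangB, ← sum_range_reflect, sum_congr rfl hterm, ← mul_sum, div_mul_eq_div_div,
    div_self (by positivity), one_div]

lemma sum_range_natCast (k : ℕ) : ∑ i ∈ range k, (i : ℝ) = k * (k - 1) / 2 := by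
  induction k with
  | zero => simp
  | succ k ih => rw [sum_range_succ, ih]; push_cast; ring

lemma sum_range_sub_div (N k : ℕ) (a : ℝ) :
    ∑ i ∈ range k, ((N : ℝ) - i - a) / a = (k * (N - a) - k * (k - 1) / 2) / a := by
  rw [← sum_div]
  simp only [sub_right_comm _ _ a, sum_sub_distrib, sum_const, card_range, nsmul_eq_mul,
    sum_range_natCast]
  ring

lemma erlangTerm_le_exp (N k : ℕ) {a : ℝ} (ha : 0 < a) :
    erlangTerm N a k ≤ exp ((k * (N - a) - k * (k - 1) / 2) / a) := by
  rcases lt_or_ge N k with hNk | hkN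
  · rw [erlangTerm_eq_zero hNk]
    positivity
  rw [erlangTerm_eq_prod N k ha.ne', ← sum_range_sub_div, exp_sum]
  refine prod_le_prod (fun i hi => ?_) fun i _ => ?_
  · have hi : (i : ℝ) ≤ N := by exact_mod_cast (mem_range.mp hi).le.trans hkN
    rw [← sub_nonneg] at hi
    calc (0 : ℝ) ≤ (N - i) / a := by positivity
      _ = 1 + (N - i - a) / a := by field_simp; ring
  · linarith [add_one_le_exp (((N : ℝ) - i - a) / a)]

lemma natCast_mul_natCast_sub_one_nonneg (k : ℕ) : (0 : ℝ) ≤ k * (k - 1 : ℝ) := by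
  rcases k with _ | k
  · simp
  · push_cast
    nlinarith

lemma sq_sub_three_mul_le_floor_mul_floor_sub_one {s : ℝ} (hs : 0 ≤ s) :
    s ^ 2 - 3 * s ≤ ⌊s⌋₊ * (⌊s⌋₊ - 1 : ℝ) := by
  have hlo : s < ⌊s⌋₊ + 1 := Nat.lt_floor_add_one s
  have hhi : (⌊s⌋₊ : ℝ) ≤ s := Nat.floor_le hs
  have hnat := natCast_mul_natCast_sub_one_nonneg ⌊s⌋₊
  rcases le_or_gt s 3 with h | h <;> nlinarith

lemma erlangTerm_floor_le_exp {N : ℕ} (hN : 1 ≤ N) {a M t : ℝ} (hc : |a - N| ≤ M * √N)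
    (hM : 2 * M ≤ √N) (ht : 0 ≤ t) :
    erlangTerm N a ⌊t * √N⌋₊ ≤ exp ((2 * M + 1) * t - t ^ 2 / 3) := by
  set s := √(N : ℝ)
  set k := ⌊t * s⌋₊
  have hN1 : (1 : ℝ) ≤ N := by exact_mod_cast hN
  have hs1 : 1 ≤ s := Real.one_le_sqrt.mpr hN1
  have hsN : s ^ 2 = N := sq_sqrt (Nat.cast_nonneg N)
  have hM0 : 0 ≤ M := nonneg_of_mul_nonneg_left ((abs_nonneg _).trans hc) (by positivity)
  obtain ⟨hca, hcb⟩ := abs_le.mp hc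
  have hMs : M * s ≤ N / 2 := by nlinarith
  have ha : N / 2 ≤ a := by linarith
  have ha' : a ≤ 3 * N / 2 := by linarith
  have hk : (k : ℝ) ≤ t * s := Nat.floor_le (by positivity)
  have hkk : (t * s) ^ 2 - 3 * (t * s) ≤ k * (k - 1 : ℝ) :=
    sq_sub_three_mul_le_floor_mul_floor_sub_one (by positivity)
  have hk1 : (k : ℝ) * (N - a) ≤ 2 * M * t * a := by
    calc (k : ℝ) * (N - a) ≤ k * (M * s) := by gcongr; linarith
      _ ≤ t * s * (M * s) := by gcongr
      _ = M * t * N := by rw [← hsN]; ring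
      _ ≤ 2 * M * t * a := by nlinarith [mul_nonneg hM0 ht]
  have hk2 : 2 * a * (t ^ 2 / 3 - t) ≤ k * (k - 1) := by
    rcases le_or_gt t 3 with h | h
    · nlinarith [natCast_mul_natCast_sub_one_nonneg k, mul_nonneg ht (sub_nonneg.mpr h)]
    · have hsq : s ≤ N := by nlinarith
      nlinarith [mul_le_mul_of_nonneg_right ha' (by nlinarith : 0 ≤ t ^ 2 / 3 - t)]
  refine (erlangTerm_le_exp N k (by linarith)).trans (exp_le_exp.mpr ?_)
  rw [div_le_iff₀ (by linarith)]
  linarith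

lemma tendsto_sqrt_natCast_atTop : Tendsto (fun N : ℕ => √(N : ℝ)) atTop atTop :=
  tendsto_sqrt_atTop.comp tendsto_natCast_atTop_atTop

section QED

variable {a : ℕ → ℝ} {β : ℝ}

lemma tendsto_div_natCast_of_qed
    (hscale : Tendsto (fun N : ℕ => (a N - N) / √N) atTop (𝓝 β)) :
    Tendsto (fun N => a N / N) atTop (𝓝 1) := by
  have h : Tendsto (fun N : ℕ => 1 + (a N - N) / √N * (√N)⁻¹) atTop (𝓝 (1 + β * 0)) :=
    tendsto_const_nhds.add (hscale.mul tendsto_sqrt_natCast_atTop.inv_tendsto_atTop)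
  rw [mul_zero, add_zero] at h
  refine h.congr' ?_
  filter_upwards [eventually_ge_atTop 1] with N hN
  have hN0 : (N : ℝ) ≠ 0 := Nat.cast_ne_zero.mpr (by omega)
  rw [← div_eq_mul_inv, div_div, mul_self_sqrt N.cast_nonneg]
  field_simp
  ring

lemma eventually_pos_of_qed
    (hscale : Tendsto (fun N : ℕ => (a N - N) / √N) atTop (𝓝 β)) :
    ∀ᶠ N in atTop, 0 < a N := by
  filter_upwards [(tendsto_div_natCast_of_qed hscale).eventually_const_lt one_pos,
    eventually_ge_atTop 1] with N hN hN1
  exact (div_pos_iff_of_pos_right (by exact_mod_cast hN1)).mp hN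

lemma eventually_abs_sub_le_of_qed
    (hscale : Tendsto (fun N : ℕ => (a N - N) / √N) atTop (𝓝 β)) :
    ∀ᶠ N in atTop, |a N - N| ≤ (|β| + 1) * √N := by
  filter_upwards [hscale.abs.eventually_le_const (lt_add_one |β|), eventually_ge_atTop 1]
    with N hN hN1
  rwa [abs_div, abs_of_nonneg (sqrt_nonneg _), div_le_iff₀ (sqrt_pos.mpr (by exact_mod_cast hN1))]
    at hN

lemma tendsto_erlangTerm_floor_of_qed
    (hscale : Tendsto (fun N : ℕ => (a N - N) / √N) atTop (𝓝 β)) {t : ℝ} (ht : 0 ≤ t) :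
    Tendsto (fun N => erlangTerm N (a N) ⌊t * √N⌋₊) atTop (𝓝 (exp (-β * t - t ^ 2 / 2))) := by
  set k : ℕ → ℕ := fun N => ⌊t * √N⌋₊
  set c : ℕ → ℝ := fun N => (a N - N) / √N
  have hinv : Tendsto (fun N : ℕ => (√(N : ℝ))⁻¹) atTop (𝓝 0) :=
    tendsto_sqrt_natCast_atTop.inv_tendsto_atTop
  have hk : Tendsto (fun N => (k N : ℝ) / √N) atTop (𝓝 t) :=
    (tendsto_nat_floor_mul_div_atTop ht).comp tendsto_sqrt_natCast_atTop
  have hk' : Tendsto (fun N => ((k N : ℝ) - 1) / √N) atTop (𝓝 t) := by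
    simpa [sub_div] using hk.sub hinv
  have hNa : Tendsto (fun N : ℕ => (N : ℝ) / a N) atTop (𝓝 1) := by
    simpa using (tendsto_div_natCast_of_qed hscale).inv₀ one_ne_zero
  have hpos : ∀ᶠ N in atTop, 0 < a N ∧ 0 < √(N : ℝ) := by
    filter_upwards [eventually_pos_of_qed hscale, eventually_ge_atTop 1] with N ha hN
    exact ⟨ha, sqrt_pos.mpr (by exact_mod_cast hN)⟩
  have hb : ∀ᶠ N in atTop, (|a N - N| + k N) / a N = (|c N| + k N / √N) * (N / a N) * (√N)⁻¹ := by
    filter_upwards [hpos] with N ⟨ha, hs⟩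
    have hsq : √(N : ℝ) ^ 2 = N := sq_sqrt (Nat.cast_nonneg N)
    simp only [c, abs_div, abs_of_pos hs]
    field_simp
    rw [hsq]
    ring
  refine (tendsto_prod_one_add_of_tendsto_sum (s := fun N => range (k N))
    (x := fun N i => ((N : ℝ) - i - a N) / a N) (b := fun N => (|a N - N| + k N) / a N)
    ?_ ?_ ?_ ?_).congr' ?_
  · filter_upwards [hpos] with N ⟨ha, _⟩ i hi
    have hik : (i : ℝ) ≤ k N := by exact_mod_cast (mem_range.mp hi).le
    rw [abs_div, abs_of_pos ha]
    gcongr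
    rw [abs_le]
    constructor <;> linarith [le_abs_self (a N - N), neg_abs_le (a N - N), i.cast_nonneg (α := ℝ)]
  · have h := ((hscale.abs.add hk).mul hNa).mul hinv
    rw [mul_zero] at h
    exact h.congr' (hb.mono fun N h => h.symm)
  · have h := (hk.mul (((hscale.abs.add hk).mul hNa).pow 2)).mul hinv
    rw [mul_zero] at h
    refine h.congr' ?_
    filter_upwards [hb, hpos] with N hbN ⟨_, hs⟩
    rw [card_range, hbN]
    field_simp
  · have h := ((hk.mul hscale).mul hNa).neg.sub (((hk.mul hk').mul hNa).div_const 2)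
    convert h.congr' ?_ using 2
    · ring
    filter_upwards [hpos] with N ⟨_, _⟩
    have hsq : √(N : ℝ) ^ 2 = N := sq_sqrt (Nat.cast_nonneg N)
    rw [sum_range_sub_div]
    simp only [c]
    field_simp
    rw [hsq]
    ring
  · filter_upwards [hpos] with N ⟨ha, _⟩
    exact (erlangTerm_eq_prod N (k N) ha.ne').symm

lemma tendsto_integral_erlangTerm_floor_of_qed
    (hscale : Tendsto (fun N : ℕ => (a N - N) / √N) atTop (𝓝 β)) :
    Tendsto (fun N => ∫ t in Set.Ioi 0, erlangTerm N (a N) ⌊t * √N⌋₊) atTop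
      (𝓝 (∫ t in Set.Ioi 0, exp (-β * t - t ^ 2 / 2))) := by
  set M := |β| + 1
  refine tendsto_integral_filter_of_dominated_convergence
    (fun t => exp ((2 * M + 1) * t - t ^ 2 / 3)) ?_ ?_ ?_ ?_
  · refine Eventually.of_forall fun N => Measurable.aestronglyMeasurable ?_
    exact (measurable_from_nat (f := erlangTerm N (a N))).comp
      (Nat.measurable_floor.comp (measurable_id.mul_const _))
  · filter_upwards [eventually_ge_atTop 1, eventually_pos_of_qed hscale,
      eventually_abs_sub_le_of_qed hscale, tendsto_sqrt_natCast_atTop.eventually_ge_atTop (2 * M)]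
      with N hN ha hc hM
    filter_upwards [ae_restrict_mem measurableSet_Ioi] with t ht
    rw [norm_of_nonneg (erlangTerm_nonneg ha.le _)]
    exact erlangTerm_floor_le_exp hN hc hM (le_of_lt ht)
  · exact (integrable_exp_mul_sub_sq_div (by norm_num) _).integrableOn
  · filter_upwards [ae_restrict_mem measurableSet_Ioi] with t ht
    exact tendsto_erlangTerm_floor_of_qed hscale (le_of_lt ht)

end QED

theorem erlangB_qed_limit_general (a : ℕ → ℝ) (β : ℝ)
    (hscale : Tendsto (fun N : ℕ => (a N - N) / Real.sqrt N) atTop (nhds β)) :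
    Tendsto (fun N : ℕ => Real.sqrt N * ErlangB N (a N)) atTop
      (nhds (stdNormalPDF β / (1 - stdNormalCDF β))) := by
  have : NeZero (volume.restrict (Set.Ioi (0 : ℝ))) := ⟨by simp⟩
  have hL : 0 < ∫ t in Set.Ioi 0, exp (-β * t - t ^ 2 / 2) :=
    integral_exp_pos ((integrable_exp_mul_sub_sq_div two_pos _).integrableOn)
  have hφ : stdNormalPDF β ≠ 0 := by unfold stdNormalPDF; positivity
  have hRiemann : ∀ᶠ N : ℕ in atTop, √N * ErlangB N (a N) =
      (∫ t in Set.Ioi 0, erlangTerm N (a N) ⌊t * √N⌋₊)⁻¹ := by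
    filter_upwards [eventually_pos_of_qed hscale, eventually_ge_atTop 1] with N ha hN
    rw [erlangB_eq_inv_sum N ha.ne', integral_Ioi_comp_floor_mul
      (fun k hk => erlangTerm_eq_zero hk _) (sqrt_pos.mpr (by exact_mod_cast hN)), inv_div,
      div_eq_mul_inv]
  rw [one_sub_stdNormalCDF, div_mul_cancel_left₀ hφ]
  exact ((tendsto_integral_erlangTerm_floor_of_qed hscale).inv₀ hL.ne').congr'
    (hRiemann.mono fun N h => h.symm)

/-- Halfin–Whitt / Jagerman asymptotics for Erlang-B under QED (square-root) scaling. -/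
theorem erlangB_qed_limit (a : ℕ → ℝ) (β : ℝ)
    (hpos : ∀ N, 0 < a N)
    (hscale : Tendsto (fun N : ℕ => (a N - N) / Real.sqrt N) atTop (nhds β)) :
    Tendsto (fun N : ℕ => Real.sqrt N * ErlangB N (a N)) atTop
      (nhds (stdNormalPDF β / (1 - stdNormalCDF β))) :=
  erlangB_qed_limit_general a β hscale
end
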